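/- arXiv:1812.11438 — 11 statements merged into one kernel-verified Lean document; each statement's English description precedes it below -/
import Mathlib

section
/- Let g : (0,∞) → ℝ be continuously differentiable with g(ρ) ≥ 0 and (ρ² g(ρ))' ≥ 0 for all ρ > 0, let ρ_l > 0 and define G(ρ) = ∫_ρ^{ρ_l} g(s) ds. Then ρ² g(ρ) → 0 as ρ → 0⁺ if and only if ρ·G(ρ) → 0 as ρ → 0⁺. -/
/-!
Write `f(ρ) = ρ² g(ρ)`; the hypothesis on `(ρ² g)'` makes `f` nondecreasing, and `g = f / s²`.
Comparing `f` on `[ρ, b]` with its value at an endpoint therefore gives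
`f(ρ) (1/ρ - 1/b) ≤ ∫_ρ^b g ≤ f(b) (1/ρ - 1/b)`.
With `b = ρ_l` and `ρ ≤ ρ_l / 2` the lower bound gives `f(ρ) ≤ 2 ρ G(ρ)`. Conversely, for a
fixed small `δ` the upper bound gives `ρ G(ρ) ≤ f(δ) + ρ ∫_δ^{ρ_l} g`, and the last term vanishes
as `ρ → 0`.
-/

open Filter Topology Set MeasureTheory intervalIntegral

section
variable {a b : ℝ}

theorem integral_inv_sq (ha : 0 < a) (hb : 0 < b) :
    ∫ s in a..b, (s ^ 2)⁻¹ = a⁻¹ - b⁻¹ := by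
  have h0 : (0 : ℝ) ∉ uIcc a b := fun h => (lt_min ha hb).not_ge h.1
  have h := integral_zpow (n := -2) (Or.inr ⟨by norm_num, h0⟩)
  norm_num at h
  rw [h]
  ring

theorem continuousOn_inv_sq_uIcc (ha : 0 < a) (hb : 0 < b) :
    ContinuousOn (fun s : ℝ => (s ^ 2)⁻¹) (uIcc a b) :=
  (continuous_pow 2).continuousOn.inv₀ fun _ hs => pow_ne_zero 2 ((lt_min ha hb).trans_le hs.1).ne'

variable {g : ℝ → ℝ}

theorem intervalIntegrable_of_monotoneOn_sq_mul (ha : 0 < a) (hb : 0 < b)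
    (hg : MonotoneOn (fun s => s ^ 2 * g s) (uIcc a b)) : IntervalIntegrable g volume a b := by
  refine (intervalIntegrable_congr fun s hs => ?_).mp
    (hg.intervalIntegrable.mul_continuousOn (continuousOn_inv_sq_uIcc ha hb))
  have hs0 : s ≠ 0 := ((lt_min ha hb).trans hs.1).ne'
  field_simp

theorem integral_le_of_monotoneOn_sq_mul (ha : 0 < a) (hab : a ≤ b)
    (hg : MonotoneOn (fun s => s ^ 2 * g s) (Icc a b)) :
    ∫ s in a..b, g s ≤ b ^ 2 * g b * (a⁻¹ - b⁻¹) := by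
  have hb := ha.trans_le hab
  rw [← integral_inv_sq ha hb, ← intervalIntegral.integral_const_mul]
  refine integral_mono_on hab (intervalIntegrable_of_monotoneOn_sq_mul ha hb (uIcc_of_le hab ▸ hg))
    ((continuousOn_inv_sq_uIcc ha hb).intervalIntegrable.const_mul _) fun s hs => ?_
  have hs0 : s ≠ 0 := (ha.trans_le hs.1).ne'
  calc g s = s ^ 2 * g s * (s ^ 2)⁻¹ := by field_simp
    _ ≤ b ^ 2 * g b * (s ^ 2)⁻¹ :=
      mul_le_mul_of_nonneg_right (hg hs (right_mem_Icc.2 hab) hs.2) (by positivity)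

theorem le_integral_of_monotoneOn_sq_mul (ha : 0 < a) (hab : a ≤ b)
    (hg : MonotoneOn (fun s => s ^ 2 * g s) (Icc a b)) :
    a ^ 2 * g a * (a⁻¹ - b⁻¹) ≤ ∫ s in a..b, g s := by
  have hb := ha.trans_le hab
  rw [← integral_inv_sq ha hb, ← intervalIntegral.integral_const_mul]
  refine integral_mono_on hab ((continuousOn_inv_sq_uIcc ha hb).intervalIntegrable.const_mul _)
    (intervalIntegrable_of_monotoneOn_sq_mul ha hb (uIcc_of_le hab ▸ hg)) fun s hs => ?_
  have hs0 : s ≠ 0 := (ha.trans_le hs.1).ne'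
  calc a ^ 2 * g a * (s ^ 2)⁻¹ ≤ s ^ 2 * g s * (s ^ 2)⁻¹ :=
        mul_le_mul_of_nonneg_right (hg (left_mem_Icc.2 hab) hs hs.1) (by positivity)
    _ = g s := by field_simp

end

theorem monotoneOn_sq_mul_of_deriv_nonneg {g g' : ℝ → ℝ}
    (hg : ∀ ρ > (0 : ℝ), HasDerivAt g (g' ρ) ρ)
    (hderiv : ∀ ρ > (0 : ℝ), 0 ≤ 2 * ρ * g ρ + ρ ^ 2 * g' ρ) :
    MonotoneOn (fun ρ => ρ ^ 2 * g ρ) (Ioi 0) := by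
  have hf : ∀ ρ > (0 : ℝ), HasDerivAt (fun ρ => ρ ^ 2 * g ρ) (2 * ρ * g ρ + ρ ^ 2 * g' ρ) ρ :=
    fun ρ hρ => ((hasDerivAt_pow 2 ρ).mul (hg ρ hρ)).congr_deriv (by norm_num)
  refine monotoneOn_of_hasDerivWithinAt_nonneg (f' := fun ρ => 2 * ρ * g ρ + ρ ^ 2 * g' ρ)
    (convex_Ioi 0) (fun ρ hρ => (hf ρ hρ).continuousAt.continuousWithinAt) ?_ ?_ <;>
    rw [interior_Ioi]
  exacts [fun ρ hρ => (hf ρ hρ).hasDerivWithinAt, hderiv]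

section
variable {g : ℝ → ℝ} {ρl : ℝ}

theorem tendsto_mul_integral_of_tendsto_sq_mul (hg : MonotoneOn (fun s => s ^ 2 * g s) (Ioi 0))
    (hg₀ : ∀ s > (0 : ℝ), 0 ≤ g s) (hρl : 0 < ρl)
    (h : Tendsto (fun ρ => ρ ^ 2 * g ρ) (𝓝[>] 0) (𝓝 0)) :
    Tendsto (fun ρ => ρ * ∫ s in ρ..ρl, g s) (𝓝[>] 0) (𝓝 0) := by
  have hIcc : ∀ {a b : ℝ}, 0 < a → MonotoneOn (fun s => s ^ 2 * g s) (Icc a b) := fun ha =>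
    hg.mono fun s hs => ha.trans_le hs.1
  have hint : ∀ {a b : ℝ}, 0 < a → a ≤ b → IntervalIntegrable g volume a b := fun ha hab =>
    intervalIntegrable_of_monotoneOn_sq_mul ha (ha.trans_le hab) (uIcc_of_le hab ▸ hIcc ha)
  have hnear : ∀ᶠ ρ in 𝓝[>] (0 : ℝ), 0 < ρ ∧ ρ < ρl :=
    (eventually_mem_nhdsWithin (a := 0) (s := Ioi 0)).and
      (nhdsWithin_le_nhds (Iio_mem_nhds hρl))
  refine tendsto_order.2 ⟨fun e he => hnear.mono fun ρ ⟨hρ, hρρl⟩ => he.trans_le <|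
    mul_nonneg hρ.le (integral_nonneg hρρl.le fun s hs => hg₀ s (hρ.trans_le hs.1)), fun ε hε => ?_⟩
  obtain ⟨δ, hfδ, hδ, hδl⟩ := ((h.eventually (gt_mem_nhds (half_pos hε))).and hnear).exists
  have htail : Tendsto (fun ρ => ρ * ∫ s in δ..ρl, g s) (𝓝[>] 0) (𝓝 0) :=
    ((continuous_mul_const _).tendsto' 0 0 (zero_mul _)).mono_left nhdsWithin_le_nhds
  filter_upwards [self_mem_nhdsWithin, nhdsWithin_le_nhds (Iio_mem_nhds hδ),
    htail.eventually (gt_mem_nhds (half_pos hε))] with ρ (hρ : 0 < ρ) (hρδ : ρ < δ) htailρ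
  have hhead : ρ * ∫ s in ρ..δ, g s ≤ δ ^ 2 * g δ := by
    have hupper := mul_le_mul_of_nonneg_left
      (integral_le_of_monotoneOn_sq_mul hρ hρδ.le (hIcc hρ)) hρ.le
    have hfδ₀ : 0 ≤ δ ^ 2 * g δ * (ρ / δ) := by have := hg₀ δ hδ; positivity
    calc ρ * ∫ s in ρ..δ, g s ≤ ρ * (δ ^ 2 * g δ * (ρ⁻¹ - δ⁻¹)) := hupper
      _ = δ ^ 2 * g δ - δ ^ 2 * g δ * (ρ / δ) := by field_simp
      _ ≤ δ ^ 2 * g δ := by linarith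
  rw [← integral_add_adjacent_intervals (hint hρ hρδ.le) (hint hδ hδl.le), mul_add]
  linarith

theorem tendsto_sq_mul_of_tendsto_mul_integral (hg : MonotoneOn (fun s => s ^ 2 * g s) (Ioi 0))
    (hg₀ : ∀ s > (0 : ℝ), 0 ≤ g s) (hρl : 0 < ρl)
    (h : Tendsto (fun ρ => ρ * ∫ s in ρ..ρl, g s) (𝓝[>] 0) (𝓝 0)) :
    Tendsto (fun ρ => ρ ^ 2 * g ρ) (𝓝[>] 0) (𝓝 0) := by
  refine squeeze_zero' (eventually_nhdsWithin_of_forall fun ρ hρ => ?_) ?_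
    (by simpa using h.const_mul 2)
  · exact mul_nonneg (sq_nonneg ρ) (hg₀ ρ hρ)
  filter_upwards [self_mem_nhdsWithin, nhdsWithin_le_nhds (Iio_mem_nhds (half_pos hρl))]
    with ρ (hρ : 0 < ρ) (hρl' : ρ < ρl / 2)
  have hlower := mul_le_mul_of_nonneg_left
    (le_integral_of_monotoneOn_sq_mul (b := ρl) hρ (by linarith)
      (hg.mono fun s hs => hρ.trans_le hs.1)) hρ.le
  have hfρ : 0 ≤ ρ ^ 2 * g ρ := mul_nonneg (sq_nonneg ρ) (hg₀ ρ hρ)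
  have hratio : ρ / ρl ≤ 1 / 2 := by rw [div_le_iff₀ hρl]; linarith
  calc ρ ^ 2 * g ρ ≤ 2 * (ρ ^ 2 * g ρ * (1 - ρ / ρl)) := by nlinarith
    _ = 2 * (ρ * (ρ ^ 2 * g ρ * (ρ⁻¹ - ρl⁻¹))) := by field_simp
    _ ≤ 2 * (ρ * ∫ s in ρ..ρl, g s) := by linarith

end

theorem stmt1_general (g g' : ℝ → ℝ)
    (hg' : ∀ ρ > (0 : ℝ), HasDerivAt g (g' ρ) ρ)
    (hgnonneg : ∀ ρ > (0 : ℝ), 0 ≤ g ρ)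
    (hmono : ∀ ρ > (0 : ℝ), 0 ≤ 2 * ρ * g ρ + ρ ^ 2 * g' ρ)
    (ρl : ℝ) (hρl : 0 < ρl) :
    Tendsto (fun ρ => ρ ^ 2 * g ρ) (𝓝[>] (0 : ℝ)) (𝓝 0) ↔
      Tendsto (fun ρ => ρ * ∫ s in ρ..ρl, g s) (𝓝[>] (0 : ℝ)) (𝓝 0) := by
  have hf := monotoneOn_sq_mul_of_deriv_nonneg hg' hmono
  exact ⟨tendsto_mul_integral_of_tendsto_sq_mul hf hgnonneg hρl,
    tendsto_sq_mul_of_tendsto_mul_integral hf hgnonneg hρl⟩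

/-- For `g ∈ C¹((0,∞))` with `g ≥ 0` and `(ρ² g(ρ))' ≥ 0`, and
`G(ρ) = ∫_ρ^{ρ_l} g(s) ds`, one has `ρ² g(ρ) → 0` as `ρ → 0⁺` iff
`ρ·G(ρ) → 0` as `ρ → 0⁺`. -/
theorem stmt1 (g g' : ℝ → ℝ)
    (hg' : ∀ ρ > (0 : ℝ), HasDerivAt g (g' ρ) ρ)
    (hg'cont : ContinuousOn g' (Set.Ioi 0))
    (hgnonneg : ∀ ρ > (0 : ℝ), 0 ≤ g ρ)
    (hmono : ∀ ρ > (0 : ℝ), 0 ≤ 2 * ρ * g ρ + ρ ^ 2 * g' ρ)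
    (ρl : ℝ) (hρl : 0 < ρl) :
    Tendsto (fun ρ => ρ ^ 2 * g ρ) (𝓝[>] (0 : ℝ)) (𝓝 0) ↔
      Tendsto (fun ρ => ρ * ∫ s in ρ..ρl, g s) (𝓝[>] (0 : ℝ)) (𝓝 0) :=
  stmt1_general g g' hg' hgnonneg hmono ρl hρl
end

section
/- Let g : (0,∞) → ℝ be continuously differentiable with g(ρ) ≥ 0 for all ρ > 0, and let ρ_l > 0. If ρ·∫_ρ^{ρ_l} g(s) ds → 0 as ρ → 0⁺, then liminf_{ρ→0⁺} ρ² g(ρ) = 0. -/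
open Filter Topology Set MeasureTheory intervalIntegral

/-- For `g ∈ C¹((0,∞))` with `g ≥ 0` and `ρ_l > 0`: if
`ρ·∫_ρ^{ρ_l} g(s) ds → 0` as `ρ → 0⁺`, then `liminf_{ρ→0⁺} ρ² g(ρ) = 0`. -/
theorem stmt3 (g g' : ℝ → ℝ)
    (hg' : ∀ ρ > (0 : ℝ), HasDerivAt g (g' ρ) ρ)
    (hg'cont : ContinuousOn g' (Set.Ioi 0))
    (hgnonneg : ∀ ρ > (0 : ℝ), 0 ≤ g ρ)
    (ρl : ℝ) (hρl : 0 < ρl)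
    (h : Tendsto (fun ρ => ρ * ∫ s in ρ..ρl, g s) (𝓝[>] (0 : ℝ)) (𝓝 0)) :
    Filter.liminf (fun ρ => ρ ^ 2 * g ρ) (𝓝[>] (0 : ℝ)) = 0 := by
  have hgc : ContinuousOn g (Set.Ioi 0) := fun x hx =>
    (hg' x hx).continuousAt.continuousWithinAt
  have hint : ∀ a b : ℝ, 0 < a → 0 < b → IntervalIntegrable g volume a b := by
    intro a b ha hb
    apply (hgc.mono ?_).intervalIntegrable
    intro x hx
    rcases Set.mem_uIcc.1 hx with ⟨h1, _⟩ | ⟨h1, _⟩ <;> exact lt_of_lt_of_le (by positivity) h1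
  -- main frequently claim
  have key : ∀ ε > (0 : ℝ), ∃ᶠ ρ in 𝓝[>] (0 : ℝ), ρ ^ 2 * g ρ < ε := by
    intro ε hε
    by_contra hcon
    have hev : ∀ᶠ ρ in 𝓝[>] (0 : ℝ), ε ≤ ρ ^ 2 * g ρ := by
      filter_upwards [not_frequently.mp hcon] with ρ hρ
      exact not_lt.mp hρ
    obtain ⟨δ0, hδ0, hδ0sub⟩ := mem_nhdsGT_iff_exists_Ioo_subset.mp hev
    have hδ0' : (0:ℝ) < δ0 := hδ0
    set δ : ℝ := min δ0 ρl / 2 with hδdef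
    have hδpos : 0 < δ := by positivity
    have hδlt0 : δ < δ0 := by
      have : min δ0 ρl ≤ δ0 := min_le_left _ _
      have h2 : δ < min δ0 ρl := by
        rw [hδdef]; linarith [lt_min hδ0 hρl]
      linarith
    have hδleρl : δ ≤ ρl := by
      have : min δ0 ρl ≤ ρl := min_le_right _ _
      rw [hδdef]; linarith [lt_min hδ0 hρl]
    -- for ρ ∈ (0, δ/2], we bound ρ * ∫_ρ^{ρl} g from below
    have hbound : ∀ ρ : ℝ, 0 < ρ → ρ ≤ δ / 2 → ε / 2 ≤ ρ * ∫ s in ρ..ρl, g s := by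
      intro ρ hρ hρδ
      have hρltδ : ρ < δ := by linarith
      have h1 : ∫ s in ρ..δ, ε * s ^ (-2 : ℤ) ≤ ∫ s in ρ..δ, g s := by
        apply intervalIntegral.integral_mono_on hρltδ.le
        · apply IntervalIntegrable.const_mul
          apply (ContinuousOn.intervalIntegrable ?_)
          apply ContinuousOn.zpow₀ continuousOn_id
          intro x hx
          left
          rcases Set.mem_uIcc.1 hx with ⟨h1, _⟩ | ⟨h1, _⟩ <;>
            exact ne_of_gt (lt_of_lt_of_le (by positivity) h1)
        · exact hint ρ δ hρ hδpos
        · intro s hs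
          have hs0 : 0 < s := lt_of_lt_of_le hρ hs.1
          have hsδ0 : s < δ0 := lt_of_le_of_lt hs.2 hδlt0
          have := hδ0sub ⟨hs0, hsδ0⟩
          have hεs : ε ≤ s ^ 2 * g s := this
          have : ε / s ^ 2 ≤ g s := by
            rw [div_le_iff₀ (by positivity)]
            linarith [hεs]
          calc ε * s ^ (-2 : ℤ) = ε / s ^ 2 := by
                rw [zpow_neg, div_eq_mul_inv]
                norm_num
            _ ≤ g s := this
      have h2 : ∫ s in ρ..δ, ε * s ^ (-2 : ℤ) = ε * (1 / ρ - 1 / δ) := by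
        rw [intervalIntegral.integral_const_mul, integral_zpow]
        · norm_num
          left
          ring
        · right
          constructor
          · norm_num
          · intro hmem
            rcases Set.mem_uIcc.1 hmem with ⟨h1, _⟩ | ⟨h1, _⟩ <;> linarith
      have h3 : (0:ℝ) ≤ ∫ s in δ..ρl, g s := by
        apply intervalIntegral.integral_nonneg hδleρl
        intro x hx
        exact hgnonneg x (lt_of_lt_of_le hδpos hx.1)
      have h4 : ∫ s in ρ..ρl, g s = (∫ s in ρ..δ, g s) + ∫ s in δ..ρl, g s :=
        (intervalIntegral.integral_add_adjacent_intervals (hint ρ δ hρ hδpos)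
          (hint δ ρl hδpos hρl)).symm
      have h5 : ε * (1 / ρ - 1 / δ) ≤ ∫ s in ρ..ρl, g s := by
        rw [h4]; rw [← h2]; linarith
      have h6 : ε * (1 - ρ / δ) ≤ ρ * ∫ s in ρ..ρl, g s := by
        have := mul_le_mul_of_nonneg_left h5 hρ.le
        calc ε * (1 - ρ / δ) = ρ * (ε * (1 / ρ - 1 / δ)) := by
              field_simp
          _ ≤ ρ * ∫ s in ρ..ρl, g s := this
      have h7 : ρ / δ ≤ 1 / 2 := by
        rw [div_le_div_iff₀ hδpos (by norm_num)]
        linarith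
      nlinarith [hε]
    have hev2 : ∀ᶠ ρ in 𝓝[>] (0 : ℝ), ε / 2 ≤ ρ * ∫ s in ρ..ρl, g s := by
      have : Set.Ioo (0:ℝ) (δ/2) ∈ 𝓝[>] (0:ℝ) :=
        Ioo_mem_nhdsGT_of_mem ⟨le_refl _, by positivity⟩
      filter_upwards [this] with ρ hρ
      exact hbound ρ hρ.1 hρ.2.le
    have := ge_of_tendsto h hev2
    linarith
  -- conclude
  have hnn : ∀ᶠ ρ in 𝓝[>] (0 : ℝ), (0:ℝ) ≤ ρ ^ 2 * g ρ := by
    filter_upwards [self_mem_nhdsWithin] with ρ hρ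
    have : (0:ℝ) < ρ := hρ
    exact mul_nonneg (by positivity) (hgnonneg ρ this)
  have hbdd : IsBoundedUnder (· ≥ ·) (𝓝[>] (0:ℝ)) (fun ρ => ρ ^ 2 * g ρ) := ⟨0, hnn⟩
  have hcobdd : IsCoboundedUnder (· ≥ ·) (𝓝[>] (0:ℝ)) (fun ρ => ρ ^ 2 * g ρ) :=
    IsCoboundedUnder.of_frequently_le ((key 1 one_pos).mono fun x hx => hx.le)
  have hle : Filter.liminf (fun ρ => ρ ^ 2 * g ρ) (𝓝[>] (0 : ℝ)) ≤ 0 := by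
    by_contra hcon
    push_neg at hcon
    have := Filter.liminf_le_of_frequently_le
      ((key _ (half_pos hcon)).mono fun x hx => hx.le) hbdd
    linarith
  have hge : (0:ℝ) ≤ Filter.liminf (fun ρ => ρ ^ 2 * g ρ) (𝓝[>] (0 : ℝ)) :=
    Filter.le_liminf_of_le hcobdd hnn
  linarith
end

section
/- Let α > 0 and δ ∈ ℝ with |δ| ≤ 2, and let p : (0,∞) → ℝ be differentiable with p'(ρ) = α·ρ^δ for all ρ > 0. Then for every pair of sub-sonic states (ρ_l, q_l) and (ρ_r, q_r) there exists a unique ρ > 0 with L_l(ρ; ρ_l, q_l) = L_r(ρ; ρ_r, q_r). -/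
/-!
Divide the Lax curves by `ρ`: `laxL = ρ u_l` and `laxR = -ρ u_r`, where `u` is the velocity
along the 1-curve (`laxVelocity`) and `u_r` is taken through the reflected state `(ρr, -qr)`.
Each velocity is continuous and strictly decreasing in `ρ`, so the curves meet exactly where
the strictly decreasing function `u_l + u_r` vanishes. For `p' = α ρ^δ` with `δ ≤ 2` the
integrand `c(s)/s` of the rarefaction branch is nonincreasing, giving
`u(ρ) ≥ q₀/ρ₀ + c(ρ₀)(1 - ρ/ρ₀)`, which is positive near `ρ = 0` for a sub-sonic state; for
`δ ≥ -2` the quantity `ρ² p'(ρ)` is nondecreasing, which makes the shock branch satisfy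
`u(ρ) ≤ q₀/ρ₀ - c(ρ₀)(1 - ρ₀/ρ)`, negative for large `ρ`. The intermediate value theorem
finishes the proof.
-/

open Filter Topology Set MeasureTheory intervalIntegral

/-- A state `(ρ₀, q₀)` is sub-sonic for the pressure law with derivative `p'`
if `ρ₀ > 0` and `|q₀/ρ₀| < c(ρ₀) = √(p'(ρ₀))`. -/
def SubSonic (p' : ℝ → ℝ) (ρ₀ q₀ : ℝ) : Prop :=
  0 < ρ₀ ∧ |q₀ / ρ₀| < Real.sqrt (p' ρ₀)

/-- The 1-Lax curve through the left state `(ρl, ql)`, for pressure law `p`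
with derivative `p'` (acoustic speed `c = √p'`):
rarefaction part for `ρ ≤ ρl`, shock part for `ρ ≥ ρl`, where
`f(ρ, ρl) = (ρ/ρl)(ρ − ρl)(p(ρ) − p(ρl))`. -/
noncomputable def laxL (p p' : ℝ → ℝ) (ρl ql ρ : ℝ) : ℝ :=
  if ρ ≤ ρl then ρ * (ql / ρl + ∫ s in ρ..ρl, Real.sqrt (p' s) / s)
  else ρ * (ql / ρl) - Real.sqrt (ρ / ρl * (ρ - ρl) * (p ρ - p ρl))

/-- The 2-Lax curve through the right state `(ρr, qr)`. -/
noncomputable def laxR (p p' : ℝ → ℝ) (ρr qr ρ : ℝ) : ℝ :=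
  if ρ ≤ ρr then ρ * (qr / ρr - ∫ s in ρ..ρr, Real.sqrt (p' s) / s)
  else ρ * (qr / ρr) + Real.sqrt (ρ / ρr * (ρ - ρr) * (p ρ - p ρr))

noncomputable def laxVelocity (p p' : ℝ → ℝ) (ρ₀ q₀ ρ : ℝ) : ℝ :=
  if ρ ≤ ρ₀ then q₀ / ρ₀ + ∫ s in ρ..ρ₀, √(p' s) / s
  else q₀ / ρ₀ - √((1 - ρ₀ / ρ) * ((p ρ - p ρ₀) / ρ₀))

lemma SubSonic.neg {p' : ℝ → ℝ} {ρ₀ q₀ : ℝ} (h : SubSonic p' ρ₀ q₀) :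
    SubSonic p' ρ₀ (-q₀) := by
  simpa [SubSonic, neg_div, abs_neg] using h

section LaxCurves

variable {p p' : ℝ → ℝ} {ρ₀ q₀ ρ : ℝ}

lemma laxL_eq_mul_laxVelocity (hρ : 0 < ρ) :
    laxL p p' ρ₀ q₀ ρ = ρ * laxVelocity p p' ρ₀ q₀ ρ := by
  unfold laxL laxVelocity
  split_ifs
  · rfl
  · have hsq : ρ / ρ₀ * (ρ - ρ₀) * (p ρ - p ρ₀) =
        ρ ^ 2 * ((1 - ρ₀ / ρ) * ((p ρ - p ρ₀) / ρ₀)) := by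
      rcases eq_or_ne ρ₀ 0 with rfl | hρ₀
      · simp
      · field_simp
    rw [hsq, Real.sqrt_mul (sq_nonneg ρ), Real.sqrt_sq hρ.le]
    ring

lemma laxR_eq_neg_laxL : laxR p p' ρ₀ q₀ ρ = -laxL p p' ρ₀ (-q₀) ρ := by
  unfold laxL laxR
  split_ifs <;> ring

lemma laxL_eq_laxR_iff {ρl ql ρr qr : ℝ} (hρ : 0 < ρ) :
    laxL p p' ρl ql ρ = laxR p p' ρr qr ρ ↔
      laxVelocity p p' ρl ql ρ + laxVelocity p p' ρr (-qr) ρ = 0 := by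
  rw [laxR_eq_neg_laxL, laxL_eq_mul_laxVelocity hρ, laxL_eq_mul_laxVelocity hρ,
    eq_neg_iff_add_eq_zero, ← mul_add, mul_eq_zero, or_iff_right hρ.ne']

lemma laxVelocity_of_le (h : ρ ≤ ρ₀) :
    laxVelocity p p' ρ₀ q₀ ρ = q₀ / ρ₀ + ∫ s in ρ..ρ₀, √(p' s) / s :=
  if_pos h

lemma laxVelocity_of_ge (h : ρ₀ ≤ ρ) :
    laxVelocity p p' ρ₀ q₀ ρ = q₀ / ρ₀ - √((1 - ρ₀ / ρ) * ((p ρ - p ρ₀) / ρ₀)) := by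
  rcases h.eq_or_lt with rfl | h
  · simp [laxVelocity]
  · exact if_neg h.not_ge

end LaxCurves

section Velocity

variable {p p' : ℝ → ℝ} {ρ₀ q₀ : ℝ}

lemma continuousOn_sqrt_div (hp' : ContinuousOn p' (Ioi 0)) :
    ContinuousOn (fun s => √(p' s) / s) (Ioi 0) :=
  (hp'.sqrt).div continuousOn_id fun _ hs => (mem_Ioi.1 hs).ne'

lemma intervalIntegrable_sqrt_div (hp' : ContinuousOn p' (Ioi 0)) {a b : ℝ} (ha : 0 < a)
    (hb : 0 < b) : IntervalIntegrable (fun s => √(p' s) / s) volume a b :=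
  ((continuousOn_sqrt_div hp').mono fun _ hs => (lt_min ha hb).trans_le hs.1).intervalIntegrable

lemma laxVelocity_strictAntiOn_Ioc (hp' : ContinuousOn p' (Ioi 0))
    (hpos : ∀ s > 0, 0 < p' s) : StrictAntiOn (laxVelocity p p' ρ₀ q₀) (Ioc 0 ρ₀) := by
  intro x hx y hy hxy
  rw [laxVelocity_of_le hx.2, laxVelocity_of_le hy.2, add_lt_add_iff_left,
    ← integral_add_adjacent_intervals (intervalIntegrable_sqrt_div hp' hx.1 hy.1)
      (intervalIntegrable_sqrt_div hp' hy.1 (hy.1.trans_le hy.2)), lt_add_iff_pos_left]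
  refine intervalIntegral_pos_of_pos_on (intervalIntegrable_sqrt_div hp' hx.1 hy.1)
    (fun s hs => ?_) hxy
  have hs0 : 0 < s := hx.1.trans hs.1
  have := hpos s hs0
  positivity

lemma laxVelocity_strictAntiOn_Ici (h0 : 0 < ρ₀) (hp : StrictMonoOn p (Ici ρ₀)) :
    StrictAntiOn (laxVelocity p p' ρ₀ q₀) (Ici ρ₀) := by
  intro x hx y hy hxy
  have hx0 : 0 < x := h0.trans_le hx
  have hdil_nonneg : 0 ≤ 1 - ρ₀ / x := sub_nonneg.2 ((div_le_one hx0).2 hx)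
  have hjump_nonneg : 0 ≤ (p x - p ρ₀) / ρ₀ :=
    div_nonneg (sub_nonneg.2 (hp.monotoneOn self_mem_Ici hx hx)) h0.le
  have hdil_lt : 1 - ρ₀ / x < 1 - ρ₀ / y :=
    sub_lt_sub_left (div_lt_div_of_pos_left h0 hx0 hxy) 1
  have hjump_lt : (p x - p ρ₀) / ρ₀ < (p y - p ρ₀) / ρ₀ :=
    div_lt_div_of_pos_right (sub_lt_sub_right (hp hx hy hxy) _) h0
  rw [laxVelocity_of_ge hx, laxVelocity_of_ge hy, sub_lt_sub_iff_left]
  exact Real.sqrt_lt_sqrt (mul_nonneg hdil_nonneg hjump_nonneg)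
    (mul_lt_mul'' hdil_lt hjump_lt hdil_nonneg hjump_nonneg)

lemma laxVelocity_strictAntiOn (h0 : 0 < ρ₀) (hp : ∀ ρ > 0, HasDerivAt p (p' ρ) ρ)
    (hp' : ContinuousOn p' (Ioi 0)) (hpos : ∀ ρ > 0, 0 < p' ρ) :
    StrictAntiOn (laxVelocity p p' ρ₀ q₀) (Ioi 0) := by
  have hmono : StrictMonoOn p (Ioi 0) :=
    strictMonoOn_of_hasDerivWithinAt_pos (convex_Ioi 0)
      (fun x hx => (hp x hx).continuousAt.continuousWithinAt)
      (fun x hx => (hp x (by simpa using hx)).hasDerivWithinAt)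
      (fun x hx => hpos x (by simpa using hx))
  rw [← Ioc_union_Ici_eq_Ioi h0]
  exact (laxVelocity_strictAntiOn_Ioc hp' hpos).union
    (laxVelocity_strictAntiOn_Ici h0 (hmono.mono (Ici_subset_Ioi.2 h0))) (isGreatest_Ioc h0)
    isLeast_Ici

lemma laxVelocity_continuousOn (h0 : 0 < ρ₀) (hp : ContinuousOn p (Ioi 0))
    (hp' : ContinuousOn p' (Ioi 0)) : ContinuousOn (laxVelocity p p' ρ₀ q₀) (Ioi 0) := by
  have hrare : ContinuousOn (fun ρ => ∫ s in ρ..ρ₀, √(p' s) / s) (Ioi 0) := fun x hx =>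
    (integral_hasDerivAt_left (intervalIntegrable_sqrt_div hp' hx h0)
      ((continuousOn_sqrt_div hp').stronglyMeasurableAtFilter isOpen_Ioi x hx)
      ((continuousOn_sqrt_div hp').continuousAt (isOpen_Ioi.mem_nhds hx))).continuousAt
      |>.continuousWithinAt
  have hshock : ContinuousOn
      (fun ρ => q₀ / ρ₀ - √((1 - ρ₀ / ρ) * ((p ρ - p ρ₀) / ρ₀))) (Ioi 0) :=
    continuousOn_const.sub ((continuousOn_const.sub (continuousOn_const.div continuousOn_id
      fun _ hx => (mem_Ioi.1 hx).ne')).mul ((hp.sub continuousOn_const).div_const _)).sqrt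
  refine ContinuousOn.if (fun x hx => ?_) ((continuousOn_const.add hrare).mono inter_subset_left)
    (hshock.mono inter_subset_left)
  have hx : x = ρ₀ := by simpa using frontier_le_subset_eq continuous_id continuous_const hx.2
  simp [hx, div_self h0.ne']

lemma laxVelocity_ge_of_le (h0 : 0 < ρ₀) (hp' : ContinuousOn p' (Ioi 0))
    (hrare : AntitoneOn (fun s => √(p' s) / s) (Ioi 0)) {ρ : ℝ} (hρ : 0 < ρ)
    (hρρ₀ : ρ ≤ ρ₀) : q₀ / ρ₀ + √(p' ρ₀) * (1 - ρ / ρ₀) ≤ laxVelocity p p' ρ₀ q₀ ρ := by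
  have hconst : √(p' ρ₀) * (1 - ρ / ρ₀) = ∫ _ in ρ..ρ₀, √(p' ρ₀) / ρ₀ := by
    rw [intervalIntegral.integral_const, smul_eq_mul]
    field_simp
  rw [laxVelocity_of_le hρρ₀, hconst, add_le_add_iff_left]
  refine integral_mono_on hρρ₀ intervalIntegrable_const
    (intervalIntegrable_sqrt_div hp' hρ h0) fun s hs => ?_
  exact hrare (mem_Ioi.2 (hρ.trans_le hs.1)) (mem_Ioi.2 h0) hs.2

lemma pressure_sub_ge (h0 : 0 < ρ₀) (hp : ∀ ρ > 0, HasDerivAt p (p' ρ) ρ)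
    (hshock : MonotoneOn (fun s => s ^ 2 * p' s) (Ioi 0)) {ρ : ℝ} (hρ : ρ₀ ≤ ρ) :
    ρ₀ * p' ρ₀ * (1 - ρ₀ / ρ) ≤ p ρ - p ρ₀ := by
  set C := ρ₀ ^ 2 * p' ρ₀
  -- `s² p'(s) ≥ C` on `[ρ₀, ∞)` says exactly that `p(s) + C/s` is nondecreasing there.
  have hg : MonotoneOn (fun s => p s + C * s⁻¹) (Ici ρ₀) := by
    refine monotoneOn_of_hasDerivWithinAt_nonneg (f' := fun s => p' s + C * -(s ^ 2)⁻¹)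
      (convex_Ici ρ₀) (fun x hx => ?_) (fun x hx => ?_) (fun x hx => ?_)
    · have hx0 : 0 < x := h0.trans_le hx
      exact ((hp x hx0).continuousAt.add
        (continuousAt_const.mul (continuousAt_inv₀ hx0.ne'))).continuousWithinAt
    · rw [interior_Ici] at hx ⊢
      have hx0 : 0 < x := h0.trans hx
      exact ((hp x hx0).add ((hasDerivAt_inv hx0.ne').const_mul C)).hasDerivWithinAt
    · rw [interior_Ici] at hx
      have hx0 : 0 < x := h0.trans hx
      have hCx : C ≤ x ^ 2 * p' x := hshock (mem_Ioi.2 h0) (mem_Ioi.2 hx0) hx.le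
      have hderiv : p' x + C * -(x ^ 2)⁻¹ = (x ^ 2 * p' x - C) / x ^ 2 := by field_simp; ring
      rw [hderiv]
      exact div_nonneg (sub_nonneg.2 hCx) (sq_nonneg x)
  have hρ₀ρ : p ρ₀ + C * ρ₀⁻¹ ≤ p ρ + C * ρ⁻¹ := hg self_mem_Ici (mem_Ici.2 hρ) hρ
  have hC : ρ₀ * p' ρ₀ * (1 - ρ₀ / ρ) = C * ρ₀⁻¹ - C * ρ⁻¹ := by
    field_simp [(h0.trans_le hρ).ne']
    ring
  linarith

lemma laxVelocity_le_of_ge (h0 : 0 < ρ₀) (hp : ∀ ρ > 0, HasDerivAt p (p' ρ) ρ)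
    (hshock : MonotoneOn (fun s => s ^ 2 * p' s) (Ioi 0)) {ρ : ℝ} (hρ : ρ₀ ≤ ρ) :
    laxVelocity p p' ρ₀ q₀ ρ ≤ q₀ / ρ₀ - √(p' ρ₀) * (1 - ρ₀ / ρ) := by
  have hdil : 0 ≤ 1 - ρ₀ / ρ := sub_nonneg.2 ((div_le_one (h0.trans_le hρ)).2 hρ)
  have hjump : p' ρ₀ * (1 - ρ₀ / ρ) ≤ (p ρ - p ρ₀) / ρ₀ := by
    rw [le_div_iff₀ h0]
    linarith [pressure_sub_ge h0 hp hshock hρ]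
  have hsq : √(p' ρ₀) * (1 - ρ₀ / ρ) = √(p' ρ₀ * (1 - ρ₀ / ρ) ^ 2) := by
    rw [Real.sqrt_mul' _ (sq_nonneg _), Real.sqrt_sq hdil]
  rw [laxVelocity_of_ge hρ, sub_le_sub_iff_left, hsq]
  refine Real.sqrt_le_sqrt ?_
  calc p' ρ₀ * (1 - ρ₀ / ρ) ^ 2 = (1 - ρ₀ / ρ) * (p' ρ₀ * (1 - ρ₀ / ρ)) := by ring
    _ ≤ (1 - ρ₀ / ρ) * ((p ρ - p ρ₀) / ρ₀) := mul_le_mul_of_nonneg_left hjump hdil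

lemma SubSonic.eventually_laxVelocity_pos (h : SubSonic p' ρ₀ q₀)
    (hp' : ContinuousOn p' (Ioi 0)) (hrare : AntitoneOn (fun s => √(p' s) / s) (Ioi 0)) :
    ∀ᶠ ρ in 𝓝[>] 0, 0 < laxVelocity p p' ρ₀ q₀ ρ := by
  obtain ⟨h0, hq⟩ := h
  have hlim : Tendsto (fun ρ => q₀ / ρ₀ + √(p' ρ₀) * (1 - ρ / ρ₀)) (𝓝[>] 0)
      (𝓝 (q₀ / ρ₀ + √(p' ρ₀))) :=
    ((Continuous.tendsto' (by fun_prop) 0 _ (by simp))).mono_left nhdsWithin_le_nhds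
  have hlim_pos : 0 < q₀ / ρ₀ + √(p' ρ₀) := by linarith [neg_abs_le (q₀ / ρ₀)]
  filter_upwards [hlim.eventually_const_lt hlim_pos, Ioc_mem_nhdsGT h0] with ρ hbound hρ
  exact hbound.trans_le (laxVelocity_ge_of_le h0 hp' hrare hρ.1 hρ.2)

lemma SubSonic.eventually_laxVelocity_neg (h : SubSonic p' ρ₀ q₀)
    (hp : ∀ ρ > 0, HasDerivAt p (p' ρ) ρ)
    (hshock : MonotoneOn (fun s => s ^ 2 * p' s) (Ioi 0)) :
    ∀ᶠ ρ in atTop, laxVelocity p p' ρ₀ q₀ ρ < 0 := by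
  obtain ⟨h0, hq⟩ := h
  have hlim : Tendsto (fun ρ => q₀ / ρ₀ - √(p' ρ₀) * (1 - ρ₀ / ρ)) atTop
      (𝓝 (q₀ / ρ₀ - √(p' ρ₀))) := by
    have hinv := (tendsto_const_nhds (x := ρ₀)).div_atTop (tendsto_id (α := ℝ))
    simpa using (((tendsto_const_nhds (x := (1 : ℝ))).sub hinv).const_mul (√(p' ρ₀))).const_sub
      (q₀ / ρ₀)
  have hlim_neg : q₀ / ρ₀ - √(p' ρ₀) < 0 := by linarith [le_abs_self (q₀ / ρ₀)]
  filter_upwards [hlim.eventually_lt_const hlim_neg, eventually_ge_atTop ρ₀] with ρ hbound hρ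
  exact (laxVelocity_le_of_ge h0 hp hshock hρ).trans_lt hbound

end Velocity

lemma StrictAntiOn.existsUnique_eq_zero {D : ℝ → ℝ} (hanti : StrictAntiOn D (Ioi 0))
    (hcont : ContinuousOn D (Ioi 0)) (hzero : ∀ᶠ x in 𝓝[>] 0, 0 < D x)
    (htop : ∀ᶠ x in atTop, D x < 0) : ∃! x, 0 < x ∧ D x = 0 := by
  obtain ⟨a, hDa, ha⟩ := (hzero.and self_mem_nhdsWithin).exists
  obtain ⟨b, hDb, hab⟩ := (htop.and (eventually_ge_atTop a)).exists
  obtain ⟨x, hx, hDx⟩ := intermediate_value_Icc' hab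
    (hcont.mono fun _ hy => (mem_Ioi.1 ha).trans_le hy.1) ⟨hDb.le, hDa.le⟩
  have hx0 : 0 < x := (mem_Ioi.1 ha).trans_le hx.1
  exact ⟨x, ⟨hx0, hDx⟩, fun y hy => hanti.injOn hy.1 hx0 (hy.2.trans hDx.symm)⟩

theorem existsUnique_laxL_eq_laxR {p p' : ℝ → ℝ} (hp : ∀ ρ > 0, HasDerivAt p (p' ρ) ρ)
    (hp' : ContinuousOn p' (Ioi 0)) (hpos : ∀ ρ > 0, 0 < p' ρ)
    (hrare : AntitoneOn (fun s => √(p' s) / s) (Ioi 0))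
    (hshock : MonotoneOn (fun s => s ^ 2 * p' s) (Ioi 0)) {ρl ql ρr qr : ℝ}
    (hl : SubSonic p' ρl ql) (hr : SubSonic p' ρr qr) :
    ∃! ρ, 0 < ρ ∧ laxL p p' ρl ql ρ = laxR p p' ρr qr ρ := by
  have hpc : ContinuousOn p (Ioi 0) := fun x hx => (hp x hx).continuousAt.continuousWithinAt
  have hr' := hr.neg
  refine (existsUnique_congr fun ρ => and_congr_right fun hρ => laxL_eq_laxR_iff hρ).2 ?_
  refine StrictAntiOn.existsUnique_eq_zero
    ((laxVelocity_strictAntiOn hl.1 hp hp' hpos).add (laxVelocity_strictAntiOn hr.1 hp hp' hpos))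
    ((laxVelocity_continuousOn hl.1 hpc hp').add (laxVelocity_continuousOn hr.1 hpc hp')) ?_ ?_
  · filter_upwards [hl.eventually_laxVelocity_pos hp' hrare,
      hr'.eventually_laxVelocity_pos hp' hrare] with ρ h₁ h₂
    exact add_pos h₁ h₂
  · filter_upwards [hl.eventually_laxVelocity_neg hp hshock,
      hr'.eventually_laxVelocity_neg hp hshock] with ρ h₁ h₂
    exact add_neg h₁ h₂

section PowerLaw

variable {α δ : ℝ}

lemma continuousOn_powerLaw : ContinuousOn (fun s : ℝ => α * s ^ δ) (Ioi 0) :=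
  continuousOn_const.mul (continuousOn_id.rpow_const fun _ hs => Or.inl (mem_Ioi.1 hs).ne')

lemma antitoneOn_sqrt_powerLaw_div (hα : 0 ≤ α) (hδ : δ ≤ 2) :
    AntitoneOn (fun s : ℝ => √(α * s ^ δ) / s) (Ioi 0) := by
  have key : ∀ s : ℝ, 0 < s → √(α * s ^ δ) / s = √(α * s ^ (δ - 2)) := by
    intro s hs
    rw [Real.rpow_sub hs, Real.rpow_two, ← mul_div_assoc, Real.sqrt_div' _ (sq_nonneg s),
      Real.sqrt_sq hs.le]
  intro x hx y hy hxy
  simp only [key x hx, key y hy]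
  exact Real.sqrt_le_sqrt (mul_le_mul_of_nonneg_left
    (Real.rpow_le_rpow_of_nonpos hx hxy (by linarith)) hα)

lemma monotoneOn_sq_mul_powerLaw (hα : 0 ≤ α) (hδ : -2 ≤ δ) :
    MonotoneOn (fun s : ℝ => s ^ 2 * (α * s ^ δ)) (Ioi 0) := by
  have key : ∀ s : ℝ, 0 < s → s ^ 2 * (α * s ^ δ) = α * s ^ (δ + 2) := by
    intro s hs
    rw [Real.rpow_add hs, Real.rpow_two]
    ring
  intro x hx y hy hxy
  simp only [key x hx, key y hy]
  gcongr
  · exact mem_Ioi.1 hx |>.le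
  · linarith

end PowerLaw

/-- For a generalized γ-law pressure with `p'(ρ) = α ρ^δ`,
`α > 0`, `|δ| ≤ 2`, the Lax curves through any sub-sonic states intersect
in a unique point `ρ > 0`. -/
theorem stmt5 (α δ : ℝ) (hα : 0 < α) (hδ : |δ| ≤ 2) (p : ℝ → ℝ)
    (hp : ∀ ρ > (0 : ℝ), HasDerivAt p (α * ρ ^ δ) ρ)
    (ρl ql ρr qr : ℝ)
    (hl : SubSonic (fun ρ => α * ρ ^ δ) ρl ql)
    (hr : SubSonic (fun ρ => α * ρ ^ δ) ρr qr) :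
    ∃! ρ : ℝ, 0 < ρ ∧
      laxL p (fun s => α * s ^ δ) ρl ql ρ =
        laxR p (fun s => α * s ^ δ) ρr qr ρ := by
  obtain ⟨hδ₁, hδ₂⟩ := abs_le.1 hδ
  exact existsUnique_laxL_eq_laxR hp continuousOn_powerLaw (fun ρ hρ => by positivity)
    (antitoneOn_sqrt_powerLaw_div hα.le hδ₂) (monotoneOn_sq_mul_powerLaw hα.le hδ₁) hl hr
end

section
/- Let α > 0 and δ ∈ ℝ with |δ| > 2, and let p : (0,∞) → ℝ be differentiable with p'(ρ) = α·ρ^δ for all ρ > 0. Then there exist sub-sonic states (ρ_l, q_l) and (ρ_r, q_r) such that L_l(ρ; ρ_l, q_l) ≠ L_r(ρ; ρ_r, q_r) for every ρ > 0, i.e. the two Lax curves have no intersection at all. -/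
open Filter Topology Set MeasureTheory intervalIntegral

/-- The basic integral computation for the rarefaction part. -/
lemma sqrt_integral_eq (α δ ρ : ℝ) (hα : 0 < α) (hρ : 0 < ρ) (hδ : 2 < δ) :
    (∫ s in ρ..1, Real.sqrt (α * s ^ δ) / s)
      = Real.sqrt α * ((1 - ρ ^ (δ / 2)) / (δ / 2)) := by
  have h1 : (∫ s in ρ..1, Real.sqrt (α * s ^ δ) / s)
      = ∫ s in ρ..1, Real.sqrt α * s ^ (δ / 2 - 1) := by
    apply intervalIntegral.integral_congr
    intro s hs
    show Real.sqrt (α * s ^ δ) / s = Real.sqrt α * s ^ (δ / 2 - 1)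
    have hs0 : 0 < s := by
      rcases Set.mem_uIcc.mp hs with h | h
      · exact lt_of_lt_of_le hρ h.1
      · exact lt_of_lt_of_le one_pos h.1
    have hsq : Real.sqrt (s ^ δ) = s ^ (δ / 2) := by
      rw [Real.sqrt_eq_rpow, ← Real.rpow_mul hs0.le]; ring_nf
    rw [Real.sqrt_mul hα.le, hsq, Real.rpow_sub hs0, Real.rpow_one, mul_div_assoc]
  rw [h1, intervalIntegral.integral_const_mul,
    integral_rpow (Or.inl (by linarith))]
  have h2 : δ / 2 - 1 + 1 = δ / 2 := by ring
  rw [h2, Real.one_rpow]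

/-- For a generalized γ-law pressure with `p'(ρ) = α ρ^δ`,
`α > 0`, `|δ| > 2`, there are sub-sonic states whose Lax curves have no
intersection at all. -/
theorem stmt6 (α δ : ℝ) (hα : 0 < α) (hδ : 2 < |δ|) (p : ℝ → ℝ)
    (hp : ∀ ρ > (0 : ℝ), HasDerivAt p (α * ρ ^ δ) ρ) :
    ∃ ρl ql ρr qr : ℝ,
      SubSonic (fun ρ => α * ρ ^ δ) ρl ql ∧
      SubSonic (fun ρ => α * ρ ^ δ) ρr qr ∧
      ∀ ρ > (0 : ℝ),
        laxL p (fun s => α * s ^ δ) ρl ql ρ ≠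
          laxR p (fun s => α * s ^ δ) ρr qr ρ := by
  have hαs : (0 : ℝ) < Real.sqrt α := Real.sqrt_pos.mpr hα
  rcases lt_abs.mp hδ with h2 | h2
  · -- Case δ > 2
    set v : ℝ := (2 + δ) / (2 * δ) * Real.sqrt α with hv_def
    have hc1 : (0 : ℝ) < (2 + δ) / (2 * δ) := by positivity
    have hv_pos : 0 < v := by positivity
    have hvα : v < Real.sqrt α := by
      have : (2 + δ) / (2 * δ) < 1 := by
        rw [div_lt_one (by linarith)]; linarith
      nlinarith
    have hsub : SubSonic (fun ρ => α * ρ ^ δ) 1 (-v) ∧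
        SubSonic (fun ρ => α * ρ ^ δ) 1 v := by
      constructor <;> refine ⟨one_pos, ?_⟩ <;>
        simp only [Real.one_rpow, mul_one, div_one, abs_neg, abs_of_pos hv_pos] <;>
        exact hvα
    refine ⟨1, -v, 1, v, hsub.1, hsub.2, ?_⟩
    intro ρ hρ
    unfold laxL laxR
    by_cases hle : ρ ≤ 1
    · rw [if_pos hle, if_pos hle]
      have hI : (∫ s in ρ..1, Real.sqrt (α * s ^ δ) / s) < v := by
        rw [sqrt_integral_eq α δ ρ hα hρ h2]
        have hr : 0 < ρ ^ (δ / 2) := Real.rpow_pos_of_pos hρ _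
        have h1 : (1 - ρ ^ (δ / 2)) / (δ / 2) < (2 + δ) / (2 * δ) := by
          rw [div_lt_div_iff₀ (by linarith) (by linarith)]
          nlinarith
        nlinarith
      apply ne_of_lt
      apply mul_lt_mul_of_pos_left _ hρ
      simp only [div_one]
      linarith
    · rw [if_neg hle, if_neg hle]
      apply ne_of_lt
      simp only [div_one]
      have hs := Real.sqrt_nonneg (ρ * (ρ - 1) * (p ρ - p 1))
      have : 0 < ρ * v := mul_pos hρ hv_pos
      linarith
  · -- Case δ < -2 (h2 : 2 < -δ)
    set m : ℝ := α / (-δ - 1) with hm_def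
    have hd1 : (1 : ℝ) < -δ - 1 := by linarith
    have hm_pos : 0 < m := by positivity
    have hmα : m < α := div_lt_self hα hd1
    set v : ℝ := Real.sqrt ((m + α) / 2) with hv_def
    have hv2 : v ^ 2 = (m + α) / 2 := Real.sq_sqrt (by linarith)
    have hv_pos : 0 < v := Real.sqrt_pos.mpr (by linarith)
    have hvα : v < Real.sqrt α := Real.sqrt_lt_sqrt (by linarith) (by linarith)
    have hmv : m < v ^ 2 := by rw [hv2]; linarith
    have hsub : SubSonic (fun ρ => α * ρ ^ δ) 1 v ∧
        SubSonic (fun ρ => α * ρ ^ δ) 1 (-v) := by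
      constructor <;> refine ⟨one_pos, ?_⟩ <;>
        simp only [Real.one_rpow, mul_one, div_one, abs_neg, abs_of_pos hv_pos] <;>
        exact hvα
    refine ⟨1, v, 1, -v, hsub.1, hsub.2, ?_⟩
    intro ρ hρ
    unfold laxL laxR
    by_cases hle : ρ ≤ 1
    · rw [if_pos hle, if_pos hle]
      have hI : 0 ≤ ∫ s in ρ..1, Real.sqrt (α * s ^ δ) / s := by
        apply intervalIntegral.integral_nonneg hle
        intro s hs
        exact div_nonneg (Real.sqrt_nonneg _) (le_trans hρ.le hs.1)
      apply ne_of_gt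
      apply mul_lt_mul_of_pos_left _ hρ
      simp only [div_one]
      linarith
    · rw [if_neg hle, if_neg hle]
      have hρ1 : 1 < ρ := not_le.mp hle
      -- compute p ρ - p 1 via FTC
      have hpd : p ρ - p 1 = ∫ s in (1:ℝ)..ρ, α * s ^ δ := by
        rw [intervalIntegral.integral_eq_sub_of_hasDerivAt
          (f := p) (f' := fun s => α * s ^ δ)]
        · intro x hx
          rw [Set.uIcc_of_le hρ1.le] at hx
          exact hp x (lt_of_lt_of_le one_pos hx.1)
        · apply ContinuousOn.intervalIntegrable
          apply continuousOn_const.mul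
          intro x hx
          rw [Set.uIcc_of_le hρ1.le] at hx
          exact (Real.continuousAt_rpow_const x δ
            (Or.inl (ne_of_gt (lt_of_lt_of_le one_pos hx.1)))).continuousWithinAt
      have hval : p ρ - p 1 = α * ((ρ ^ (δ + 1) - 1) / (δ + 1)) := by
        rw [hpd, intervalIntegral.integral_const_mul,
          integral_rpow (Or.inr ⟨by linarith, by
            rw [Set.uIcc_of_le hρ1.le]; intro h; exact absurd h.1 (by norm_num)⟩),
          Real.one_rpow]
      have hrp : 0 < ρ ^ (δ + 1) := Real.rpow_pos_of_pos hρ _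
      have hrp1 : ρ ^ (δ + 1) < 1 :=
        Real.rpow_lt_one_of_one_lt_of_neg hρ1 (by linarith)
      have heq : α * ((ρ ^ (δ + 1) - 1) / (δ + 1))
          = α * (1 - ρ ^ (δ + 1)) / (-δ - 1) := by
        rw [mul_div_assoc, show (1 - ρ ^ (δ + 1)) = -(ρ ^ (δ + 1) - 1) by ring,
          show (-δ - 1) = -(δ + 1) by ring, neg_div_neg_eq]
      have hub : p ρ - p 1 < m := by
        rw [hval]
        rw [heq, hm_def, div_lt_div_iff₀ (by linarith) (by linarith)]
        nlinarith [mul_pos (mul_pos hα hrp) (show (0:ℝ) < -δ - 1 by linarith)]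
      have hlb : 0 ≤ p ρ - p 1 := by
        rw [hval, heq]
        exact div_nonneg (by nlinarith) (by linarith)
      have hf : ρ * (ρ - 1) * (p ρ - p 1) < (ρ * v) ^ 2 := by
        have hd : p ρ - p 1 < v ^ 2 := lt_trans hub hmv
        nlinarith [mul_lt_mul_of_pos_left hd (mul_pos hρ hρ),
          mul_nonneg hρ.le hlb]
      have hsq : Real.sqrt (ρ * (ρ - 1) * (p ρ - p 1)) < ρ * v :=
        (Real.sqrt_lt' (mul_pos hρ hv_pos)).mpr hf
      apply ne_of_gt
      simp only [div_one]
      linarith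
end

section
/- Let α > 0 and δ < −2, and let p : (0,∞) → ℝ be differentiable with p'(ρ) = α·ρ^δ for all ρ > 0. Let ρ_l > 0 and q_l ∈ ℝ satisfy √(−1/(δ+1))·c(ρ_l) < q_l/ρ_l < c(ρ_l) (in particular (ρ_l, q_l) is sub-sonic). Then L_l(ρ; ρ_l, q_l) > 0 for every ρ > 0. -/
open Filter Topology Set MeasureTheory intervalIntegral

/-- For `p'(ρ) = α ρ^δ` with `α > 0`, `δ < −2`, and a sub-sonic
left state with `√(−1/(δ+1))·c(ρl) < ql/ρl < c(ρl)`, the 1-Lax curve is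
strictly positive for all `ρ > 0`. -/
theorem stmt8 (α δ : ℝ) (hα : 0 < α) (hδ : δ < -2) (p : ℝ → ℝ)
    (hp : ∀ ρ > (0 : ℝ), HasDerivAt p (α * ρ ^ δ) ρ)
    (ρl ql : ℝ) (hρl : 0 < ρl)
    (h1 : Real.sqrt (-1 / (δ + 1)) * Real.sqrt (α * ρl ^ δ) < ql / ρl)
    (h2 : ql / ρl < Real.sqrt (α * ρl ^ δ)) :
    ∀ ρ > (0 : ℝ), laxL p (fun s => α * s ^ δ) ρl ql ρ > 0 := by

  have hδ1 : δ + 1 < -1 := by linarith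
  have hδ1' : δ + 1 < 0 := by linarith
  have hA : 0 ≤ -1 / (δ + 1) := by
    rw [div_nonneg_iff]; right; constructor <;> linarith
  have hql : 0 < ql / ρl := lt_of_le_of_lt (by positivity) h1
  -- key: (ql/ρl)^2 > α * ρl^δ * (-1/(δ+1))
  have hK : α * ρl ^ δ * (-1 / (δ + 1)) < (ql / ρl) ^ 2 := by
    have h1' : Real.sqrt ((-1 / (δ + 1)) * (α * ρl ^ δ)) < ql / ρl := by
      rwa [Real.sqrt_mul hA]
    have := Real.lt_sq_of_sqrt_lt h1'
    nlinarith
  intro ρ hρ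
  unfold laxL
  by_cases hle : ρ ≤ ρl
  · rw [if_pos hle]
    have hint : 0 ≤ ∫ s in ρ..ρl, Real.sqrt (α * s ^ δ) / s := by
      apply intervalIntegral.integral_nonneg hle
      intro s hs
      have hs0 : 0 < s := lt_of_lt_of_le hρ hs.1
      positivity
    have : 0 < ql / ρl + ∫ s in ρ..ρl, Real.sqrt (α * s ^ δ) / s := by linarith
    exact mul_pos hρ this
  · rw [if_neg hle]
    push_neg at hle
    have hpdiff : p ρ - p ρl = ∫ s in ρl..ρ, α * s ^ δ := by
      symm
      apply intervalIntegral.integral_eq_sub_of_hasDerivAt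
      · intro s hs
        rw [Set.uIcc_of_le hle.le] at hs
        exact hp s (lt_of_lt_of_le hρl hs.1)
      · apply ContinuousOn.intervalIntegrable
        apply ContinuousOn.mul continuousOn_const
        intro s hs
        rw [Set.uIcc_of_le hle.le] at hs
        exact (Real.continuousAt_rpow_const s δ
          (Or.inl (ne_of_gt (lt_of_lt_of_le hρl hs.1)))).continuousWithinAt
    have hcalc : p ρ - p ρl = α * ((ρ ^ (δ + 1) - ρl ^ (δ + 1)) / (δ + 1)) := by
      rw [hpdiff, intervalIntegral.integral_const_mul, integral_rpow]
      right
      constructor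
      · intro h; rw [h] at hδ1'; linarith
      · rw [Set.uIcc_of_le hle.le]
        intro h
        exact absurd h.1 (by linarith)
    have hρpow : 0 < ρ ^ (δ + 1) := Real.rpow_pos_of_pos hρ _
    have hρlpow : ρ ^ (δ + 1) < ρl ^ (δ + 1) :=
      Real.rpow_lt_rpow_of_neg hρl hle hδ1'
    have hpd_pos : 0 < p ρ - p ρl := by
      rw [hcalc]
      apply mul_pos hα
      apply div_pos_of_neg_of_neg _ hδ1'
      linarith
    have hpd_lt : p ρ - p ρl < α * ρl ^ (δ + 1) * (-1 / (δ + 1)) := by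
      rw [hcalc]
      rw [div_eq_mul_inv, div_eq_mul_inv, neg_mul, one_mul]
      have hinv : (δ + 1)⁻¹ < 0 := inv_neg''.mpr hδ1'
      nlinarith [mul_neg_of_pos_of_neg (mul_pos hα hρpow) hinv]
    have hrl1 : ρl ^ (δ + 1) = ρl ^ δ * ρl := Real.rpow_add_one (ne_of_gt hρl) δ
    -- bound on f
    have hf : ρ / ρl * (ρ - ρl) * (p ρ - p ρl) < (ρ * (ql / ρl)) ^ 2 := by
      have hstep : ρ / ρl * (ρ - ρl) * (p ρ - p ρl)
          < ρ / ρl * ρ * (α * ρl ^ (δ + 1) * (-1 / (δ + 1))) := by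
        have h01 : 0 < ρ / ρl := by positivity
        have hb : ρ / ρl * (ρ - ρl) < ρ / ρl * ρ :=
          mul_lt_mul_of_pos_left (by linarith) h01
        exact mul_lt_mul'' hb hpd_lt
          (mul_pos h01 (sub_pos.mpr hle)).le hpd_pos.le
      have heq : ρ / ρl * ρ * (α * ρl ^ (δ + 1) * (-1 / (δ + 1)))
          = ρ ^ 2 * (α * ρl ^ δ * (-1 / (δ + 1))) := by
        have hc : ρ / ρl * ρ * ρl = ρ ^ 2 := by field_simp
        rw [hrl1, ← hc]; ring
      have : ρ ^ 2 * (α * ρl ^ δ * (-1 / (δ + 1))) < ρ ^ 2 * (ql / ρl) ^ 2 := by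
        apply mul_lt_mul_of_pos_left hK (by positivity)
      calc ρ / ρl * (ρ - ρl) * (p ρ - p ρl)
          < ρ / ρl * ρ * (α * ρl ^ (δ + 1) * (-1 / (δ + 1))) := hstep
        _ = ρ ^ 2 * (α * ρl ^ δ * (-1 / (δ + 1))) := heq
        _ < ρ ^ 2 * (ql / ρl) ^ 2 := this
        _ = (ρ * (ql / ρl)) ^ 2 := by ring
    have hsqrt : Real.sqrt (ρ / ρl * (ρ - ρl) * (p ρ - p ρl)) < ρ * (ql / ρl) := by
      rw [show ρ * (ql / ρl) = Real.sqrt ((ρ * (ql / ρl)) ^ 2) by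
        rw [Real.sqrt_sq (by positivity)]]
      have hf0 : 0 ≤ ρ / ρl * (ρ - ρl) * (p ρ - p ρl) :=
        mul_nonneg (mul_nonneg (by positivity) (by linarith)) hpd_pos.le
      exact Real.sqrt_lt_sqrt hf0 hf
    linarith
end

section
/- Let p : (0,∞) → ℝ be continuously differentiable with p'(ρ) > 0 for all ρ > 0, and let p_∞ = lim_{ρ→∞} p(ρ) ∈ ℝ ∪ {∞}. Assume ρ·p'(ρ) + p(ρ) ≤ p_∞ for all ρ > 0 (which is automatic if p_∞ = ∞). Then for every sub-sonic state (ρ_l, q_l) there exists ρ > ρ_l with L_l(ρ; ρ_l, q_l) < 0, i.e. ρ·q_l/ρ_l − √(f(ρ, ρ_l)) < 0. -/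
open Filter Topology Set

/-- Let `p ∈ C¹((0,∞))` with `p' > 0` and
`p_∞ = lim_{ρ→∞} p(ρ) ∈ ℝ ∪ {∞}`, and assume `ρ p'(ρ) + p(ρ) ≤ p_∞`
for all `ρ > 0` (automatic when `p_∞ = ∞`). Then for every sub-sonic state
`(ρl, ql)` there is `ρ > ρl` with
`L_l(ρ; ρl, ql) = ρ ql/ρl − √(f(ρ, ρl)) < 0`. -/
theorem stmt10 (p p' : ℝ → ℝ)
    (hp' : ∀ ρ > (0 : ℝ), HasDerivAt p (p' ρ) ρ)
    (hp'cont : ContinuousOn p' (Set.Ioi 0))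
    (hppos : ∀ ρ > (0 : ℝ), 0 < p' ρ)
    (hbound : Tendsto p atTop atTop ∨
      ∃ pinf : ℝ, Tendsto p atTop (𝓝 pinf) ∧
        ∀ ρ > (0 : ℝ), ρ * p' ρ + p ρ ≤ pinf) :
    ∀ ρl ql : ℝ, SubSonic p' ρl ql →
      ∃ ρ > ρl,
        ρ * (ql / ρl) - Real.sqrt (ρ / ρl * (ρ - ρl) * (p ρ - p ρl)) < 0 := by
  intro ρl ql hss
  obtain ⟨hρl, hsub⟩ := hss
  set v := ql / ρl with hv
  -- strict monotonicity of p on Ioi 0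
  have hmono : StrictMonoOn p (Set.Ioi 0) := by
    apply strictMonoOn_of_deriv_pos (convex_Ioi 0)
    · exact fun x hx => (hp' x hx).continuousAt.continuousWithinAt
    · intro x hx
      rw [interior_Ioi] at hx
      rw [(hp' x hx).deriv]
      exact hppos x hx
  -- the key sufficient condition
  have key : ∀ ρ : ℝ, ρl < ρ → ρ * ρl * v ^ 2 < (ρ - ρl) * (p ρ - p ρl) →
      ρ * v - Real.sqrt (ρ / ρl * (ρ - ρl) * (p ρ - p ρl)) < 0 := by
    intro ρ hρ hineq
    have hρ0 : 0 < ρ := lt_trans hρl hρ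
    have hf : ρ ^ 2 * v ^ 2 < ρ / ρl * (ρ - ρl) * (p ρ - p ρl) := by
      have h2 : ρ / ρl * (ρ - ρl) * (p ρ - p ρl)
          = (ρ / ρl) * ((ρ - ρl) * (p ρ - p ρl)) := by ring
      rw [h2]
      have h3 : (ρ / ρl) * (ρ * ρl * v ^ 2) < (ρ / ρl) * ((ρ - ρl) * (p ρ - p ρl)) :=
        mul_lt_mul_of_pos_left hineq (div_pos hρ0 hρl)
      calc ρ ^ 2 * v ^ 2 = (ρ / ρl) * (ρ * ρl * v ^ 2) := by
            field_simp
        _ < _ := h3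
    rcases le_or_gt (ρ * v) 0 with h | h
    · have : 0 < ρ / ρl * (ρ - ρl) * (p ρ - p ρl) :=
        lt_of_le_of_lt (by positivity) hf
      have := Real.sqrt_pos.mpr this
      linarith
    · have : ρ * v < Real.sqrt (ρ / ρl * (ρ - ρl) * (p ρ - p ρl)) := by
        rw [Real.lt_sqrt h.le]
        calc (ρ * v) ^ 2 = ρ ^ 2 * v ^ 2 := by ring
          _ < _ := hf
      linarith
  -- case v ≤ 0
  rcases le_or_gt v 0 with hv0 | hv0
  · refine ⟨ρl + 1, by linarith, ?_⟩
    have hp1 : p ρl < p (ρl + 1) := hmono hρl (by simp; linarith) (by linarith)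
    have hfpos : 0 < (ρl + 1) / ρl * (ρl + 1 - ρl) * (p (ρl + 1) - p ρl) := by
      have : 0 < (ρl + 1) / ρl := div_pos (by linarith) hρl
      nlinarith
    have hs := Real.sqrt_pos.mpr hfpos
    have : (ρl + 1) * v ≤ 0 := mul_nonpos_of_nonneg_of_nonpos (by linarith) hv0
    linarith
  -- case v > 0
  have hv2 : v ^ 2 < p' ρl := by
    have := (Real.lt_sqrt (abs_nonneg v)).mp hsub
    rwa [sq_abs] at this
  rcases hbound with htop | ⟨pinf, htend, hle⟩
  · -- p → ∞
    have h1 : ∀ᶠ ρ in atTop, p ρl + 2 * ρl * v ^ 2 < p ρ :=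
      htop.eventually_gt_atTop _
    have h2 : ∀ᶠ ρ in atTop, 2 * ρl ≤ ρ := eventually_ge_atTop _
    have h3 : ∀ᶠ ρ in atTop, ρl < ρ := eventually_gt_atTop _
    obtain ⟨ρ, hρ1, hρ2, hρ3⟩ := (h1.and (h2.and h3)).exists
    refine ⟨ρ, hρ3, key ρ hρ3 ?_⟩
    have hA : ρ / 2 ≤ ρ - ρl := by linarith
    have hB : 2 * ρl * v ^ 2 < p ρ - p ρl := by linarith
    have hρ0 : (0:ℝ) < ρ / 2 := by linarith
    have hC : ρ / 2 * (2 * ρl * v ^ 2) < (ρ / 2) * (p ρ - p ρl) :=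
      mul_lt_mul_of_pos_left hB hρ0
    have hD : (ρ / 2) * (p ρ - p ρl) ≤ (ρ - ρl) * (p ρ - p ρl) := by
      have : 0 ≤ p ρ - p ρl := by nlinarith [sq_nonneg v]
      nlinarith
    nlinarith
  · -- p → pinf
    have hεpos : 0 < pinf - p ρl - ρl * v ^ 2 := by
      have h1 := hle ρl hρl
      have h2 : ρl * v ^ 2 < ρl * p' ρl := mul_lt_mul_of_pos_left hv2 hρl
      linarith
    set ε := pinf - p ρl - ρl * v ^ 2 with hε
    have h1 : ∀ᶠ ρ in atTop, pinf - ε / 2 < p ρ :=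
      htend.eventually (eventually_gt_nhds (by linarith))
    have h2 : ∀ᶠ ρ in atTop, 2 * ρl * (ρl * v ^ 2 + ε / 2) / ε < ρ :=
      eventually_gt_atTop _
    have h3 : ∀ᶠ ρ in atTop, ρl < ρ := eventually_gt_atTop _
    obtain ⟨ρ, hρ1, hρ2, hρ3⟩ := (h1.and (h2.and h3)).exists
    refine ⟨ρ, hρ3, key ρ hρ3 ?_⟩
    have hpρ : ρl * v ^ 2 + ε / 2 < p ρ - p ρl := by
      have : pinf - ε / 2 = p ρl + ρl * v ^ 2 + ε / 2 := by rw [hε]; ring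
      linarith
    have hρε : 2 * ρl * (ρl * v ^ 2 + ε / 2) < ρ * ε := by
      have := (div_lt_iff₀ hεpos).mp hρ2
      linarith
    nlinarith [mul_pos (sub_pos.mpr hρ3) (lt_trans (by positivity : (0:ℝ) < ρl * v ^ 2 + ε / 2) hpρ)]
end

section
/- Let p : (0,∞) → ℝ be continuously differentiable with p'(ρ) > 0 for all ρ > 0, and suppose p_∞ = lim_{ρ→∞} p(ρ) is finite. If for every sub-sonic state (ρ_l, q_l) there exists ρ > ρ_l with q_l/ρ_l < √((1/ρ_l)(1 − ρ_l/ρ)(p(ρ) − p(ρ_l))) (equivalently L_l(ρ; ρ_l, q_l) < 0), then p'(ρ_l) ≤ (p_∞ − p(ρ_l))/ρ_l for all ρ_l > 0. -/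
open Filter Topology Set

/-- Let `p ∈ C¹((0,∞))` with `p' > 0` and finite limit
`p_∞ = lim_{ρ→∞} p(ρ)`. If for every sub-sonic state `(ρl, ql)` there is
`ρ > ρl` with `ql/ρl < √((1/ρl)(1 − ρl/ρ)(p(ρ) − p(ρl)))` (i.e.
`L_l(ρ; ρl, ql) < 0`), then `p'(ρl) ≤ (p_∞ − p(ρl))/ρl` for all `ρl > 0`. -/
theorem stmt11 (p p' : ℝ → ℝ) (pinf : ℝ)
    (hp' : ∀ ρ > (0 : ℝ), HasDerivAt p (p' ρ) ρ)
    (hp'cont : ContinuousOn p' (Set.Ioi 0))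
    (hppos : ∀ ρ > (0 : ℝ), 0 < p' ρ)
    (hlim : Tendsto p atTop (𝓝 pinf))
    (hneg : ∀ ρl ql : ℝ, SubSonic p' ρl ql →
      ∃ ρ > ρl,
        ql / ρl < Real.sqrt (1 / ρl * (1 - ρl / ρ) * (p ρ - p ρl))) :
    ∀ ρl > (0 : ℝ), p' ρl ≤ (pinf - p ρl) / ρl := by
  intro ρl hρl
  -- p is strictly monotone on (0, ∞)
  have hmono : StrictMonoOn p (Set.Ioi 0) := by
    apply strictMonoOn_of_deriv_pos (convex_Ioi 0)
    · exact fun x hx => (hp' x hx).continuousAt.continuousWithinAt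
    · intro x hx
      rw [interior_Ioi] at hx
      rw [(hp' x hx).deriv]
      exact hppos x hx
  have hple : ∀ ρ > (0 : ℝ), p ρ ≤ pinf := by
    intro ρ hρ
    refine ge_of_tendsto hlim (Filter.eventually_atTop.2 ⟨ρ + 1, fun y hy => ?_⟩)
    exact le_of_lt (hmono (mem_Ioi.2 hρ) (mem_Ioi.2 (by linarith)) (by linarith))
  by_contra h
  push_neg at h
  set A := (pinf - p ρl) / ρl with hA
  set B := p' ρl with hB
  have hA0 : 0 ≤ A := div_nonneg (by linarith [hple ρl hρl]) hρl.le
  have hAB : A < B := h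
  have hsq : Real.sqrt A < Real.sqrt B := Real.sqrt_lt_sqrt hA0 hAB
  set m := (Real.sqrt A + Real.sqrt B) / 2 with hm
  have hm0 : 0 ≤ m := by positivity
  have hmA : Real.sqrt A < m := by rw [hm]; linarith
  have hmB : m < Real.sqrt B := by rw [hm]; linarith
  have hsub : SubSonic p' ρl (m * ρl) := by
    refine ⟨hρl, ?_⟩
    rw [mul_div_assoc, div_self hρl.ne', mul_one, abs_of_nonneg hm0]
    exact hmB
  obtain ⟨ρ, hρgt, hlt⟩ := hneg ρl (m * ρl) hsub
  rw [mul_div_assoc, div_self hρl.ne', mul_one] at hlt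
  have hρpos : 0 < ρ := lt_trans hρl hρgt
  -- bound the expression by A
  have hE : 1 / ρl * (1 - ρl / ρ) * (p ρ - p ρl) ≤ A := by
    have h1 : 0 < 1 - ρl / ρ := by
      rw [sub_pos]
      exact (div_lt_one hρpos).2 hρgt
    have h2 : 1 - ρl / ρ ≤ 1 := by
      have : 0 ≤ ρl / ρ := div_nonneg hρl.le hρpos.le
      linarith
    have h3 : 0 ≤ p ρ - p ρl := by
      have := hmono (mem_Ioi.2 hρl) (mem_Ioi.2 hρpos) hρgt
      linarith
    have h4 : p ρ - p ρl ≤ pinf - p ρl := by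
      have := hple ρ hρpos
      linarith
    have h5 : (1 - ρl / ρ) * (p ρ - p ρl) ≤ pinf - p ρl := by
      calc (1 - ρl / ρ) * (p ρ - p ρl) ≤ 1 * (p ρ - p ρl) :=
            mul_le_mul_of_nonneg_right h2 h3
        _ = p ρ - p ρl := one_mul _
        _ ≤ pinf - p ρl := h4
    calc 1 / ρl * (1 - ρl / ρ) * (p ρ - p ρl)
        = 1 / ρl * ((1 - ρl / ρ) * (p ρ - p ρl)) := by ring
      _ ≤ 1 / ρl * (pinf - p ρl) := mul_le_mul_of_nonneg_left h5 (by positivity)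
      _ = A := by rw [hA]; ring
  have : Real.sqrt (1 / ρl * (1 - ρl / ρ) * (p ρ - p ρl)) ≤ Real.sqrt A :=
    Real.sqrt_le_sqrt hE
  linarith
end

section
/- Let p : (0,∞) → ℝ be three times continuously differentiable with p'(ρ) > 0, and suppose 2·p'(ρ) + ρ·p''(ρ) ≥ 0 and 6·p'(ρ) + 6·ρ·p''(ρ) + ρ²·p'''(ρ) ≥ 0 for all ρ > 0. Then for all 0 < ρ_l ≤ ρ, 2·f(ρ, ρ_l)·∂²_ρ f(ρ, ρ_l) − (∂_ρ f(ρ, ρ_l))² ≥ 0, where f(ρ, ρ_l) = (ρ/ρ_l)(ρ − ρ_l)(p(ρ) − p(ρ_l)) and ∂_ρ denotes the partial derivative with respect to the first argument. -/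
open Filter Topology Set

/-!
With `f = f(·, ρ_l)`, the quantity `E = 2 f f'' - f'²` has derivative `E' = 2 f f'''`, and it
vanishes at `ρ_l`, where `f` and `f'` both vanish. On `[ρ_l, ρ]` we have `f ≥ 0` because `p` is
increasing, and `ρ_l ρ f''' = (ρ - ρ_l)(6p' + 6ρp'' + ρ²p''') + 3ρ_l(2p' + ρp'') ≥ 0`, so `E` is
nondecreasing there and hence nonnegative.
-/

theorem monotoneOn_two_mul_mul_sub_sq {f f₁ f₂ f₃ : ℝ → ℝ} {a b : ℝ}
    (hf : ∀ x ∈ Icc a b, HasDerivAt f (f₁ x) x) (hf₁ : ∀ x ∈ Icc a b, HasDerivAt f₁ (f₂ x) x)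
    (hf₂ : ∀ x ∈ Icc a b, HasDerivAt f₂ (f₃ x) x) (h : ∀ x ∈ Ioo a b, 0 ≤ f x * f₃ x) :
    MonotoneOn (fun x => 2 * f x * f₂ x - f₁ x ^ 2) (Icc a b) := by
  have hE : ∀ x ∈ Icc a b,
      HasDerivAt (fun x => 2 * f x * f₂ x - f₁ x ^ 2) (2 * (f x * f₃ x)) x := by
    intro x hx
    exact ((((hf x hx).const_mul 2).fun_mul (hf₂ x hx)).fun_sub ((hf₁ x hx).fun_pow 2)).congr_deriv
      (by ring)
  refine monotoneOn_of_hasDerivWithinAt_nonneg (f' := fun x => 2 * (f x * f₃ x)) (convex_Icc a b)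
    (fun x hx => (hE x hx).continuousAt.continuousWithinAt) (fun x hx => ?_) (fun x hx => ?_)
  · exact (hE x (interior_subset hx)).hasDerivWithinAt
  · rw [interior_Icc] at hx
    exact mul_nonneg zero_le_two (h x hx)

section Derivatives

variable {p p' p'' p''' : ℝ → ℝ} {c x : ℝ}

theorem hasDerivAt_div_mul_sub_mul_sub (hp : HasDerivAt p (p' x) x) :
    HasDerivAt (fun y => y / c * (y - c) * (p y - p c))
      ((2 * x - c) / c * (p x - p c) + x * (x - c) / c * p' x) x := by
  have hq := ((hasDerivAt_id' x).div_const c).fun_mul ((hasDerivAt_id' x).sub_const c)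
  exact (hq.fun_mul (hp.sub_const (p c))).congr_deriv (by ring)

theorem hasDerivAt_div_mul_sub_mul_sub_deriv (hp : HasDerivAt p (p' x) x)
    (hp' : HasDerivAt p' (p'' x) x) :
    HasDerivAt (fun y => (2 * y - c) / c * (p y - p c) + y * (y - c) / c * p' y)
      (2 / c * (p x - p c) + 2 * (2 * x - c) / c * p' x + x * (x - c) / c * p'' x) x := by
  have hq₁ := (((hasDerivAt_id' x).const_mul 2).sub_const c).div_const c
  have hq := ((hasDerivAt_id' x).fun_mul ((hasDerivAt_id' x).sub_const c)).div_const c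
  exact ((hq₁.fun_mul (hp.sub_const (p c))).fun_add (hq.fun_mul hp')).congr_deriv (by ring)

theorem hasDerivAt_div_mul_sub_mul_sub_deriv_deriv (hp : HasDerivAt p (p' x) x)
    (hp' : HasDerivAt p' (p'' x) x) (hp'' : HasDerivAt p'' (p''' x) x) :
    HasDerivAt
      (fun y => 2 / c * (p y - p c) + 2 * (2 * y - c) / c * p' y + y * (y - c) / c * p'' y)
      (6 / c * p' x + 3 * (2 * x - c) / c * p'' x + x * (x - c) / c * p''' x) x := by
  have hq₁ := ((((hasDerivAt_id' x).const_mul 2).sub_const c).const_mul 2).div_const c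
  have hq := ((hasDerivAt_id' x).fun_mul ((hasDerivAt_id' x).sub_const c)).div_const c
  exact ((((hp.sub_const (p c)).const_mul (2 / c)).fun_add (hq₁.fun_mul hp')).fun_add
    (hq.fun_mul hp'')).congr_deriv (by ring)

end Derivatives

theorem third_deriv_nonneg {c x p₁ p₂ p₃ : ℝ} (hc : 0 < c) (hcx : c ≤ x)
    (h₁ : 0 ≤ 2 * p₁ + x * p₂) (h₂ : 0 ≤ 6 * p₁ + 6 * x * p₂ + x ^ 2 * p₃) :
    0 ≤ 6 / c * p₁ + 3 * (2 * x - c) / c * p₂ + x * (x - c) / c * p₃ := by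
  have hx : 0 < x := hc.trans_le hcx
  have key : 6 / c * p₁ + 3 * (2 * x - c) / c * p₂ + x * (x - c) / c * p₃ =
      ((x - c) * (6 * p₁ + 6 * x * p₂ + x ^ 2 * p₃) + 3 * c * (2 * p₁ + x * p₂)) / (c * x) := by
    field_simp
    ring
  rw [key]
  have := mul_nonneg (sub_nonneg.2 hcx) h₂
  have := mul_nonneg (by positivity : (0 : ℝ) ≤ 3 * c) h₁
  positivity

theorem stmt12_general (p p' p'' p''' : ℝ → ℝ)
    (hp' : ∀ ρ > (0 : ℝ), HasDerivAt p (p' ρ) ρ)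
    (hp'' : ∀ ρ > (0 : ℝ), HasDerivAt p' (p'' ρ) ρ)
    (hp''' : ∀ ρ > (0 : ℝ), HasDerivAt p'' (p''' ρ) ρ)
    (hppos : ∀ ρ > (0 : ℝ), 0 < p' ρ)
    (h1 : ∀ ρ > (0 : ℝ), 0 ≤ 2 * p' ρ + ρ * p'' ρ)
    (h2 : ∀ ρ > (0 : ℝ), 0 ≤ 6 * p' ρ + 6 * ρ * p'' ρ + ρ ^ 2 * p''' ρ) :
    ∀ ρl ρ : ℝ, 0 < ρl → ρl ≤ ρ →
      0 ≤ 2 * (ρ / ρl * (ρ - ρl) * (p ρ - p ρl)) *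
            deriv (deriv (fun x => x / ρl * (x - ρl) * (p x - p ρl))) ρ -
          (deriv (fun x => x / ρl * (x - ρl) * (p x - p ρl)) ρ) ^ 2 := by
  intro ρl ρ hρl hle
  have hρ : 0 < ρ := hρl.trans_le hle
  have hp_mono : MonotoneOn p (Ioi 0) :=
    monotoneOn_of_hasDerivWithinAt_nonneg (convex_Ioi 0)
      (fun x hx => (hp' x hx).continuousAt.continuousWithinAt)
      (fun x hx => (hp' x (interior_subset hx)).hasDerivWithinAt)
      (fun x hx => (hppos x (interior_subset hx)).le)
  have hderiv : deriv (fun x => x / ρl * (x - ρl) * (p x - p ρl)) =ᶠ[𝓝 ρ]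
      fun y => (2 * y - ρl) / ρl * (p y - p ρl) + y * (y - ρl) / ρl * p' y :=
    eventually_of_mem (Ioi_mem_nhds hρ) fun x hx =>
      (hasDerivAt_div_mul_sub_mul_sub (hp' x hx)).deriv
  rw [hderiv.deriv_eq, hderiv.eq_of_nhds,
    (hasDerivAt_div_mul_sub_mul_sub_deriv (hp' ρ hρ) (hp'' ρ hρ)).deriv]
  have hpos : ∀ x ∈ Icc ρl ρ, x > 0 := fun x hx => hρl.trans_le hx.1
  have hE := monotoneOn_two_mul_mul_sub_sq (a := ρl) (b := ρ)
    (fun x hx => hasDerivAt_div_mul_sub_mul_sub (hp' x (hpos x hx)))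
    (fun x hx => hasDerivAt_div_mul_sub_mul_sub_deriv (hp' x (hpos x hx)) (hp'' x (hpos x hx)))
    (fun x hx => hasDerivAt_div_mul_sub_mul_sub_deriv_deriv (hp' x (hpos x hx))
      (hp'' x (hpos x hx)) (hp''' x (hpos x hx)))
    (fun x hx => by
      have hx0 : x > 0 := hpos x (Ioo_subset_Icc_self hx)
      have hf : 0 ≤ x / ρl * (x - ρl) * (p x - p ρl) :=
        mul_nonneg (mul_nonneg (by positivity) (sub_nonneg.2 hx.1.le))
          (sub_nonneg.2 (hp_mono hρl hx0 hx.1.le))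
      exact mul_nonneg hf (third_deriv_nonneg hρl hx.1.le (h1 x hx0) (h2 x hx0)))
    (left_mem_Icc.2 hle) (right_mem_Icc.2 hle) hle
  simpa using hE

/-- For `p ∈ C³((0,∞))` with `p' > 0`, `2p' + ρp'' ≥ 0` and
`6p' + 6ρp'' + ρ²p''' ≥ 0`, the function `f(ρ, ρ_l) = (ρ/ρ_l)(ρ−ρ_l)(p(ρ)−p(ρ_l))`
satisfies `2 f ∂²_ρ f − (∂_ρ f)² ≥ 0` for all `0 < ρ_l ≤ ρ`. -/
theorem stmt12 (p p' p'' p''' : ℝ → ℝ)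
    (hp' : ∀ ρ > (0 : ℝ), HasDerivAt p (p' ρ) ρ)
    (hp'' : ∀ ρ > (0 : ℝ), HasDerivAt p' (p'' ρ) ρ)
    (hp''' : ∀ ρ > (0 : ℝ), HasDerivAt p'' (p''' ρ) ρ)
    (hp'''cont : ContinuousOn p''' (Set.Ioi 0))
    (hppos : ∀ ρ > (0 : ℝ), 0 < p' ρ)
    (h1 : ∀ ρ > (0 : ℝ), 0 ≤ 2 * p' ρ + ρ * p'' ρ)
    (h2 : ∀ ρ > (0 : ℝ), 0 ≤ 6 * p' ρ + 6 * ρ * p'' ρ + ρ ^ 2 * p''' ρ) :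
    ∀ ρl ρ : ℝ, 0 < ρl → ρl ≤ ρ →
      0 ≤ 2 * (ρ / ρl * (ρ - ρl) * (p ρ - p ρl)) *
            deriv (deriv (fun x => x / ρl * (x - ρl) * (p x - p ρl))) ρ -
          (deriv (fun x => x / ρl * (x - ρl) * (p x - p ρl)) ρ) ^ 2 :=
  stmt12_general p p' p'' p''' hp' hp'' hp''' hppos h1 h2
end

section
/- Let p : (0,∞) → ℝ be three times continuously differentiable and set f(ρ, ρ_l) = (ρ/ρ_l)(ρ − ρ_l)(p(ρ) − p(ρ_l)). Then for all ρ, ρ_l > 0, ρ_l·∂³_ρ f(ρ, ρ_l) = 6·p'(ρ) + 3·(2ρ − ρ_l)·p''(ρ) + ρ·(ρ − ρ_l)·p'''(ρ); in particular, if 2·p'(ρ) + ρ·p''(ρ) ≥ 0 and 6·p'(ρ) + 6·ρ·p''(ρ) + ρ²·p'''(ρ) ≥ 0, then ∂³_ρ f(ρ, ρ_l) ≥ 0 for every ρ_l with 0 < ρ_l ≤ ρ. -/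
open Filter Topology Set

/-!
The identity is Leibniz' rule for `f = u · v` with `u x = x (x - ρl) / ρl` quadratic and
`v = p - p ρl`. For the sign, multiply it by `ρ`:
`ρ (ρl f''') = (ρ - ρl) (6 p' + 6 ρ p'' + ρ² p''') + 3 ρl (2 p' + ρ p'')`,
where both terms are nonnegative when `0 < ρl ≤ ρ`.
-/

section IteratedDeriv

variable {f f₁ f₂ f₃ : ℝ → ℝ} {s : Set ℝ}

theorem hasDerivAt_deriv_of_isOpen (hs : IsOpen s) (hf : ∀ x ∈ s, HasDerivAt f (f₁ x) x)
    (hf₁ : ∀ x ∈ s, HasDerivAt f₁ (f₂ x) x) : ∀ x ∈ s, HasDerivAt (deriv f) (f₂ x) x := by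
  intro x hx
  refine (hf₁ x hx).congr_of_eventuallyEq ?_
  filter_upwards [hs.mem_nhds hx] with y hy using (hf y hy).deriv

theorem deriv_deriv_deriv_eq_of_isOpen (hs : IsOpen s) (hf : ∀ x ∈ s, HasDerivAt f (f₁ x) x)
    (hf₁ : ∀ x ∈ s, HasDerivAt f₁ (f₂ x) x) (hf₂ : ∀ x ∈ s, HasDerivAt f₂ (f₃ x) x) :
    ∀ x ∈ s, deriv (deriv (deriv f)) x = f₃ x := fun x hx =>
  (hasDerivAt_deriv_of_isOpen hs (hasDerivAt_deriv_of_isOpen hs hf hf₁) hf₂ x hx).deriv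

end IteratedDeriv

section ThirdDerivative

variable {p p' p'' p''' : ℝ → ℝ} {ρl ρ : ℝ}

theorem mul_deriv_deriv_deriv_eq (hp' : ∀ x > (0 : ℝ), HasDerivAt p (p' x) x)
    (hp'' : ∀ x > (0 : ℝ), HasDerivAt p' (p'' x) x)
    (hp''' : ∀ x > (0 : ℝ), HasDerivAt p'' (p''' x) x) (hρl : 0 < ρl) (hρ : 0 < ρ) :
    ρl * deriv (deriv (deriv (fun x => x / ρl * (x - ρl) * (p x - p ρl)))) ρ =
      6 * p' ρ + 3 * (2 * ρ - ρl) * p'' ρ + ρ * (ρ - ρl) * p''' ρ := by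
  have hq : ∀ x, HasDerivAt (fun y : ℝ => y * (y - ρl)) (2 * x - ρl) x := fun x =>
    ((hasDerivAt_id x).fun_mul ((hasDerivAt_id x).sub_const ρl)).congr_deriv
      (by simp only [id_eq]; ring)
  have hl : ∀ x, HasDerivAt (fun y : ℝ => 2 * y - ρl) 2 x := fun x =>
    (((hasDerivAt_id x).const_mul 2).sub_const ρl).congr_deriv (mul_one 2)
  have hf : (fun x => x / ρl * (x - ρl) * (p x - p ρl)) =
      fun x => x * (x - ρl) * (p x - p ρl) / ρl := by
    ext x
    ring
  have h₁ : ∀ x > (0 : ℝ), HasDerivAt (fun x => x * (x - ρl) * (p x - p ρl) / ρl)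
      (((2 * x - ρl) * (p x - p ρl) + x * (x - ρl) * p' x) / ρl) x := fun x hx =>
    ((hq x).fun_mul ((hp' x hx).sub_const (p ρl))).div_const ρl
  have h₂ : ∀ x > (0 : ℝ),
      HasDerivAt (fun x => ((2 * x - ρl) * (p x - p ρl) + x * (x - ρl) * p' x) / ρl)
        ((2 * (p x - p ρl) + 2 * (2 * x - ρl) * p' x + x * (x - ρl) * p'' x) / ρl) x :=
    fun x hx => (((hl x).fun_mul ((hp' x hx).sub_const (p ρl))).fun_add
      ((hq x).fun_mul (hp'' x hx))).div_const ρl |>.congr_deriv (by ring)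
  have h₃ : ∀ x > (0 : ℝ), HasDerivAt
      (fun x => (2 * (p x - p ρl) + 2 * (2 * x - ρl) * p' x + x * (x - ρl) * p'' x) / ρl)
      ((6 * p' x + 3 * (2 * x - ρl) * p'' x + x * (x - ρl) * p''' x) / ρl) x := fun x hx =>
    (((((hp' x hx).sub_const (p ρl)).const_mul 2).fun_add
      (((hl x).const_mul 2).fun_mul (hp'' x hx))).fun_add
      ((hq x).fun_mul (hp''' x hx))).div_const ρl |>.congr_deriv (by ring)
  rw [hf, deriv_deriv_deriv_eq_of_isOpen isOpen_Ioi h₁ h₂ h₃ ρ hρ, mul_div_cancel₀ _ hρl.ne']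

theorem deriv_deriv_deriv_nonneg (hp' : ∀ x > (0 : ℝ), HasDerivAt p (p' x) x)
    (hp'' : ∀ x > (0 : ℝ), HasDerivAt p' (p'' x) x)
    (hp''' : ∀ x > (0 : ℝ), HasDerivAt p'' (p''' x) x)
    (hA : 0 ≤ 2 * p' ρ + ρ * p'' ρ) (hB : 0 ≤ 6 * p' ρ + 6 * ρ * p'' ρ + ρ ^ 2 * p''' ρ)
    (hρl : 0 < ρl) (hle : ρl ≤ ρ) :
    0 ≤ deriv (deriv (deriv (fun x => x / ρl * (x - ρl) * (p x - p ρl)))) ρ := by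
  have hρ : 0 < ρ := hρl.trans_le hle
  have key : ρ * (ρl * deriv (deriv (deriv (fun x => x / ρl * (x - ρl) * (p x - p ρl)))) ρ) =
      (ρ - ρl) * (6 * p' ρ + 6 * ρ * p'' ρ + ρ ^ 2 * p''' ρ) +
        3 * ρl * (2 * p' ρ + ρ * p'' ρ) := by
    rw [mul_deriv_deriv_deriv_eq hp' hp'' hp''' hρl hρ]
    ring
  have hpos : 0 ≤ ρ * (ρl * deriv (deriv (deriv
      (fun x => x / ρl * (x - ρl) * (p x - p ρl)))) ρ) := by
    have : 0 ≤ ρ - ρl := sub_nonneg.mpr hle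
    rw [key]
    positivity
  exact nonneg_of_mul_nonneg_right (nonneg_of_mul_nonneg_right hpos hρ) hρl

end ThirdDerivative

theorem stmt13_general (p p' p'' p''' : ℝ → ℝ)
    (hp' : ∀ ρ > (0 : ℝ), HasDerivAt p (p' ρ) ρ)
    (hp'' : ∀ ρ > (0 : ℝ), HasDerivAt p' (p'' ρ) ρ)
    (hp''' : ∀ ρ > (0 : ℝ), HasDerivAt p'' (p''' ρ) ρ) :
    (∀ ρl > (0 : ℝ), ∀ ρ > (0 : ℝ),
      ρl * deriv (deriv (deriv (fun x => x / ρl * (x - ρl) * (p x - p ρl)))) ρ =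
        6 * p' ρ + 3 * (2 * ρ - ρl) * p'' ρ + ρ * (ρ - ρl) * p''' ρ) ∧
    ((∀ ρ > (0 : ℝ), 0 ≤ 2 * p' ρ + ρ * p'' ρ) →
      (∀ ρ > (0 : ℝ), 0 ≤ 6 * p' ρ + 6 * ρ * p'' ρ + ρ ^ 2 * p''' ρ) →
      ∀ ρl ρ : ℝ, 0 < ρl → ρl ≤ ρ →
        0 ≤ deriv (deriv (deriv (fun x => x / ρl * (x - ρl) * (p x - p ρl)))) ρ) :=
  ⟨fun _ hρl _ hρ => mul_deriv_deriv_deriv_eq hp' hp'' hp''' hρl hρ,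
    fun hA hB _ ρ hρl hle =>
      deriv_deriv_deriv_nonneg hp' hp'' hp''' (hA ρ (hρl.trans_le hle)) (hB ρ (hρl.trans_le hle))
        hρl hle⟩

/-- For `p ∈ C³((0,∞))` and
`f(ρ, ρ_l) = (ρ/ρ_l)(ρ−ρ_l)(p(ρ)−p(ρ_l))` the identity
`ρ_l ∂³_ρ f = 6p'(ρ) + 3(2ρ−ρ_l)p''(ρ) + ρ(ρ−ρ_l)p'''(ρ)` holds for all
`ρ, ρ_l > 0`; in particular, if `2p' + ρp'' ≥ 0` and
`6p' + 6ρp'' + ρ²p''' ≥ 0` for all `ρ > 0`, then `∂³_ρ f(ρ, ρ_l) ≥ 0`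
whenever `0 < ρ_l ≤ ρ`. -/
theorem stmt13 (p p' p'' p''' : ℝ → ℝ)
    (hp' : ∀ ρ > (0 : ℝ), HasDerivAt p (p' ρ) ρ)
    (hp'' : ∀ ρ > (0 : ℝ), HasDerivAt p' (p'' ρ) ρ)
    (hp''' : ∀ ρ > (0 : ℝ), HasDerivAt p'' (p''' ρ) ρ)
    (hp'''cont : ContinuousOn p''' (Set.Ioi 0)) :
    (∀ ρl > (0 : ℝ), ∀ ρ > (0 : ℝ),
      ρl * deriv (deriv (deriv (fun x => x / ρl * (x - ρl) * (p x - p ρl)))) ρ =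
        6 * p' ρ + 3 * (2 * ρ - ρl) * p'' ρ + ρ * (ρ - ρl) * p''' ρ) ∧
    ((∀ ρ > (0 : ℝ), 0 ≤ 2 * p' ρ + ρ * p'' ρ) →
      (∀ ρ > (0 : ℝ), 0 ≤ 6 * p' ρ + 6 * ρ * p'' ρ + ρ ^ 2 * p''' ρ) →
      ∀ ρl ρ : ℝ, 0 < ρl → ρl ≤ ρ →
        0 ≤ deriv (deriv (deriv (fun x => x / ρl * (x - ρl) * (p x - p ρl)))) ρ) :=
  stmt13_general p p' p'' p''' hp' hp'' hp'''
end

section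
/- Let p : (0,∞) → ℝ be twice continuously differentiable with p'(ρ) > 0 for all ρ > 0 and c(ρ) = √(p'(ρ)). Assume lim_{ρ→0⁺} c(ρ) = 0 and 2·p'(ρ) − ρ·p''(ρ) ≥ 0 for all ρ > 0. Then for every ρ_l > 0, liminf_{ρ→0⁺} ( ∫_ρ^{ρ_l} c(s)/s ds − c(ρ) − c(ρ_l) ) ≥ 0. -/
open Filter Topology Set MeasureTheory intervalIntegral

/-!
With `c = √p'`, the chain rule gives `c' = p'' / (2c)`, and the hypothesis `ρ p'' ≤ 2p'` turns
this into `c'(s) ≤ c(s) / s`. Integrating over `[ρ, ρ_l]` yields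
`c(ρ_l) - c(ρ) ≤ ∫_ρ^{ρ_l} c(s)/s ds`, so the expression under the liminf is at least `-2 c(ρ)`,
which tends to `0` as `ρ → 0⁺`.
-/

lemma div_two_sqrt_le_sqrt_div {a b x : ℝ} (ha : 0 < a) (hx : 0 < x) (h : x * b ≤ 2 * a) :
    b / (2 * √a) ≤ √a / x := by
  rw [div_le_div_iff₀ (by positivity) hx]
  nlinarith [Real.mul_self_sqrt ha.le]

lemma sub_le_integral_div_self_of_hasDerivAt {f f' : ℝ → ℝ} {a b : ℝ} (ha : 0 < a) (hab : a ≤ b)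
    (hf : ∀ x ∈ Icc a b, HasDerivAt f (f' x) x) (hf' : ∀ x ∈ Ioo a b, f' x ≤ f x / x) :
    f b - f a ≤ ∫ x in a..b, f x / x := by
  have hcont : ContinuousOn f (Icc a b) := fun x hx => (hf x hx).continuousAt.continuousWithinAt
  have hquot : ContinuousOn (fun x => f x / x) (Icc a b) :=
    hcont.div continuousOn_id fun x hx => (ha.trans_le hx.1).ne'
  exact sub_le_integral_of_hasDeriv_right_of_le hab hcont
    (fun x hx => (hf x (Ioo_subset_Icc_self hx)).hasDerivWithinAt)
    hquot.integrableOn_Icc hf'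

lemma liminf_nonneg_of_tendsto_zero_of_eventuallyLE {α : Type*} {l : Filter α} {u v : α → ℝ}
    (hv : Tendsto v l (𝓝 0)) (hvu : v ≤ᶠ[l] u) : 0 ≤ liminf u l := by
  rw [liminf_eq]
  by_cases hbdd : BddAbove {a | ∀ᶠ x in l, a ≤ u x}
  · refine le_of_forall_lt fun y hy => ?_
    have hmem : y / 2 ∈ {a | ∀ᶠ x in l, a ≤ u x} :=
      ((hv.eventually (eventually_gt_nhds (by linarith))).and hvu).mono
        fun x hx => hx.1.le.trans hx.2
    linarith [le_csSup hbdd hmem]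
  · rw [Real.sSup_of_not_bddAbove hbdd]

theorem stmt14_general (p' p'' : ℝ → ℝ)
    (hp'' : ∀ ρ > (0 : ℝ), HasDerivAt p' (p'' ρ) ρ)
    (hppos : ∀ ρ > (0 : ℝ), 0 < p' ρ)
    (hlim : Tendsto (fun ρ => Real.sqrt (p' ρ)) (𝓝[>] (0 : ℝ)) (𝓝 0))
    (hineq : ∀ ρ > (0 : ℝ), 0 ≤ 2 * p' ρ - ρ * p'' ρ) :
    ∀ ρl > (0 : ℝ),
      0 ≤ Filter.liminf
        (fun ρ => (∫ s in ρ..ρl, Real.sqrt (p' s) / s) -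
          Real.sqrt (p' ρ) - Real.sqrt (p' ρl)) (𝓝[>] (0 : ℝ)) := by
  intro ρl hρl
  have hc_deriv : ∀ x > (0 : ℝ), HasDerivAt (fun y => √(p' y)) (p'' x / (2 * √(p' x))) x :=
    fun x hx => (hp'' x hx).sqrt (hppos x hx).ne'
  have hc_gain : ∀ ρ ∈ Ioo 0 ρl, √(p' ρl) - √(p' ρ) ≤ ∫ s in ρ..ρl, √(p' s) / s :=
    fun ρ hρ => sub_le_integral_div_self_of_hasDerivAt hρ.1 hρ.2.le
      (fun x hx => hc_deriv x (hρ.1.trans_le hx.1))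
      (fun x hx => div_two_sqrt_le_sqrt_div (hppos x (hρ.1.trans hx.1)) (hρ.1.trans hx.1)
        (by linarith [hineq x (hρ.1.trans hx.1)]))
  refine liminf_nonneg_of_tendsto_zero_of_eventuallyLE (v := fun ρ => -2 * √(p' ρ))
    (by simpa using hlim.const_mul (-2)) ?_
  filter_upwards [Ioo_mem_nhdsGT hρl] with ρ hρ
  linarith [hc_gain ρ hρ]

/-- For `p ∈ C²((0,∞))` with `p' > 0`, `c = √p'`,
`lim_{ρ→0⁺} c(ρ) = 0` and `2p'(ρ) − ρp''(ρ) ≥ 0`, one has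
`liminf_{ρ→0⁺} ( ∫_ρ^{ρ_l} c(s)/s ds − c(ρ) − c(ρ_l) ) ≥ 0`
for every `ρ_l > 0`. -/
theorem stmt14 (p p' p'' : ℝ → ℝ)
    (hp' : ∀ ρ > (0 : ℝ), HasDerivAt p (p' ρ) ρ)
    (hp'' : ∀ ρ > (0 : ℝ), HasDerivAt p' (p'' ρ) ρ)
    (hp''cont : ContinuousOn p'' (Set.Ioi 0))
    (hppos : ∀ ρ > (0 : ℝ), 0 < p' ρ)
    (hlim : Tendsto (fun ρ => Real.sqrt (p' ρ)) (𝓝[>] (0 : ℝ)) (𝓝 0))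
    (hineq : ∀ ρ > (0 : ℝ), 0 ≤ 2 * p' ρ - ρ * p'' ρ) :
    ∀ ρl > (0 : ℝ),
      0 ≤ Filter.liminf
        (fun ρ => (∫ s in ρ..ρl, Real.sqrt (p' s) / s) -
          Real.sqrt (p' ρ) - Real.sqrt (p' ρl)) (𝓝[>] (0 : ℝ)) :=
  stmt14_general p' p'' hp'' hppos hlim hineq
end

section
/- Let p : (0,∞) → ℝ be continuously differentiable with p'(ρ) > 0 for all ρ > 0 and c(ρ) = √(p'(ρ)). Assume there exist η ∈ (0,1) and a ∈ (0,∞) such that ρ^η·c(ρ) → a as ρ → 0⁺. Then for every ρ_l > 0, the quantity ∫_ρ^{ρ_l} c(s)/s ds − c(ρ) − c(ρ_l) tends to +∞ as ρ → 0⁺; in particular liminf_{ρ→0⁺} ( ∫_ρ^{ρ_l} c(s)/s ds − c(ρ) − c(ρ_l) ) ≥ 0. -/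
open Filter Topology Set MeasureTheory intervalIntegral

/-!
For any `m < a < M`, near `0` the speed satisfies `m s^(-η) ≤ c(s) ≤ M s^(-η)`. Hence
`∫_ρ^{ρ_l} c(s)/s ds ≥ (m/η) ρ^(-η) - O(1)` while `c(ρ) ≤ M ρ^(-η)`, and since `η < 1`
the bounds can be chosen with `M < m/η`, so the difference grows like a positive multiple
of `ρ^(-η)`.
-/

/-- In `ℝ` this liminf is the junk value `sSup univ = 0`. -/
theorem Real.liminf_eq_zero_of_tendsto_atTop {α : Type*} {f : α → ℝ} {l : Filter α}
    (hf : Tendsto f l atTop) : liminf f l = 0 := by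
  rw [liminf_eq, show {x | ∀ᶠ y in l, x ≤ f y} = univ from
    eq_univ_of_forall fun x => hf.eventually_ge_atTop x, Real.sSup_univ]

theorem rpow_neg_mul_lt_iff_lt_rpow_mul {s η m x : ℝ} (hs : 0 < s) :
    m * s ^ (-η) < x ↔ m < s ^ η * x := by
  rw [Real.rpow_neg hs.le, ← div_eq_mul_inv, div_lt_iff₀ (by positivity), mul_comm]

theorem lt_rpow_neg_mul_iff_rpow_mul_lt {s η M x : ℝ} (hs : 0 < s) :
    x < M * s ^ (-η) ↔ s ^ η * x < M := by
  rw [Real.rpow_neg hs.le, ← div_eq_mul_inv, lt_div_iff₀ (by positivity), mul_comm]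

theorem integral_rpow_neg_sub_one {η ρ δ : ℝ} (hη : η ≠ 0) (hρ : 0 < ρ) (hδ : 0 < δ) :
    ∫ s in ρ..δ, s ^ (-η - 1) = (ρ ^ (-η) - δ ^ (-η)) / η := by
  have h0 : (0 : ℝ) ∉ uIcc ρ δ := fun h => by
    rcases Set.mem_uIcc.1 h with ⟨h1, -⟩ | ⟨h1, -⟩ <;> linarith
  rw [integral_rpow (Or.inr ⟨fun h => hη (by linarith), h0⟩), show -η - 1 + 1 = -η by ring,
    div_neg, ← neg_div, neg_sub]

theorem intervalIntegrable_div_id_of_continuousOn_Ioi {c : ℝ → ℝ} (hc : ContinuousOn c (Ioi 0))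
    {x y : ℝ} (hx : 0 < x) (hy : 0 < y) :
    IntervalIntegrable (fun s => c s / s) volume x y := by
  refine ((hc.div continuousOn_id fun s hs => ne_of_gt hs).mono ?_).intervalIntegrable
  exact fun s hs => (lt_min hx hy).trans_le hs.1

theorem le_integral_div_id_of_rpow_neg_le {c : ℝ → ℝ} {η m ρ δ : ℝ}
    (hc : ContinuousOn c (Ioi 0)) (hη : 0 < η) (hρ : 0 < ρ) (hρδ : ρ ≤ δ)
    (hm : ∀ s ∈ Icc ρ δ, m * s ^ (-η) ≤ c s) :
    m / η * (ρ ^ (-η) - δ ^ (-η)) ≤ ∫ s in ρ..δ, c s / s := by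
  have hδ : 0 < δ := hρ.trans_le hρδ
  have hint_pow : IntervalIntegrable (fun s => m * s ^ (-η - 1)) volume ρ δ :=
    (continuousOn_const.mul (continuousOn_id.rpow_const fun s hs =>
      Or.inl (hρ.trans_le hs.1).ne')).intervalIntegrable_of_Icc hρδ
  calc m / η * (ρ ^ (-η) - δ ^ (-η))
      = ∫ s in ρ..δ, m * s ^ (-η - 1) := by
        rw [intervalIntegral.integral_const_mul, integral_rpow_neg_sub_one hη.ne' hρ hδ]; ring
    _ ≤ ∫ s in ρ..δ, c s / s := by
        refine integral_mono_on hρδ hint_pow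
          (intervalIntegrable_div_id_of_continuousOn_Ioi hc hρ hδ) fun s hs => ?_
        have hs0 : 0 < s := hρ.trans_le hs.1
        rw [Real.rpow_sub hs0, Real.rpow_one, le_div_iff₀ hs0, ← mul_div_assoc,
          div_mul_cancel₀ _ hs0.ne']
        exact hm s hs

theorem tendsto_integral_div_id_sub_atTop {c : ℝ → ℝ} {η a ρl : ℝ}
    (hc : ContinuousOn c (Ioi 0)) (hη : 0 < η) (hη1 : η < 1) (ha : 0 < a)
    (hlim : Tendsto (fun ρ => ρ ^ η * c ρ) (𝓝[>] 0) (𝓝 a)) (hρl : 0 < ρl) :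
    Tendsto (fun ρ => (∫ s in ρ..ρl, c s / s) - c ρ) (𝓝[>] 0) atTop := by
  obtain ⟨M, haM, hMa⟩ := exists_between ((lt_div_iff₀ hη).2 (by nlinarith) : a < a / η)
  obtain ⟨m, hMm, hma⟩ := exists_between ((lt_div_iff₀' hη).1 hMa)
  obtain ⟨δ₀, hδ₀, hsub⟩ := mem_nhdsGT_iff_exists_Ioc_subset.1 (hlim (Ioo_mem_nhds hma haM))
  set δ := min δ₀ ρl
  have hδ : 0 < δ := lt_min hδ₀ hρl
  have hbounds : ∀ s ∈ Ioc 0 δ, m * s ^ (-η) ≤ c s ∧ c s ≤ M * s ^ (-η) := fun s hs =>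
    have hs' := hsub ⟨hs.1, hs.2.trans (min_le_left _ _)⟩
    ⟨((rpow_neg_mul_lt_iff_lt_rpow_mul hs.1).2 hs'.1).le,
      ((lt_rpow_neg_mul_iff_rpow_mul_lt hs.1).2 hs'.2).le⟩
  set C := (∫ s in δ..ρl, c s / s) - m / η * δ ^ (-η)
  have hlower : ∀ ρ ∈ Ioc 0 δ, (m / η - M) * ρ ^ (-η) + C ≤ (∫ s in ρ..ρl, c s / s) - c ρ := by
    intro ρ hρ
    have hsplit := integral_add_adjacent_intervals
      (intervalIntegrable_div_id_of_continuousOn_Ioi hc hρ.1 hδ)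
      (intervalIntegrable_div_id_of_continuousOn_Ioi hc hδ hρl)
    have hnear := le_integral_div_id_of_rpow_neg_le hc hη hρ.1 hρ.2 fun s hs =>
      (hbounds s ⟨hρ.1.trans_le hs.1, hs.2⟩).1
    linarith [(hbounds ρ hρ).2]
  have hcoeff : 0 < m / η - M := sub_pos.2 ((lt_div_iff₀ hη).2 (by linarith))
  refine tendsto_atTop_mono' _ ?_ (tendsto_atTop_add_const_right _ C
    ((tendsto_rpow_neg_nhdsGT_zero (neg_neg_of_pos hη)).const_mul_atTop hcoeff))
  filter_upwards [Ioc_mem_nhdsGT hδ] with ρ hρ using hlower ρ hρ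

theorem stmt16_general (p' : ℝ → ℝ)
    (hp'cont : ContinuousOn p' (Set.Ioi 0))
    (hlim : ∃ η a : ℝ, 0 < η ∧ η < 1 ∧ 0 < a ∧
      Tendsto (fun ρ => ρ ^ η * Real.sqrt (p' ρ)) (𝓝[>] (0 : ℝ)) (𝓝 a)) :
    ∀ ρl > (0 : ℝ),
      Tendsto
        (fun ρ => (∫ s in ρ..ρl, Real.sqrt (p' s) / s) -
          Real.sqrt (p' ρ) - Real.sqrt (p' ρl)) (𝓝[>] (0 : ℝ)) atTop ∧
      0 ≤ Filter.liminf
        (fun ρ => (∫ s in ρ..ρl, Real.sqrt (p' s) / s) -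
          Real.sqrt (p' ρ) - Real.sqrt (p' ρl)) (𝓝[>] (0 : ℝ)) := by
  obtain ⟨η, a, hη, hη1, ha, hlim⟩ := hlim
  intro ρl hρl
  have htendsto := tendsto_atTop_add_const_right _ (-Real.sqrt (p' ρl))
    (tendsto_integral_div_id_sub_atTop hp'cont.sqrt hη hη1 ha hlim hρl)
  simp only [← sub_eq_add_neg] at htendsto
  exact ⟨htendsto, (Real.liminf_eq_zero_of_tendsto_atTop htendsto).ge⟩

/-- For `p ∈ C¹((0,∞))` with `p' > 0`, `c = √p'`, if there are
`η ∈ (0,1)` and `a ∈ (0,∞)` with `ρ^η c(ρ) → a` as `ρ → 0⁺`, then for every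
`ρ_l > 0` the quantity `∫_ρ^{ρ_l} c(s)/s ds − c(ρ) − c(ρ_l)` tends to `+∞`
as `ρ → 0⁺`; in particular its liminf at `0⁺` is nonnegative. -/
theorem stmt16 (p p' : ℝ → ℝ)
    (hp' : ∀ ρ > (0 : ℝ), HasDerivAt p (p' ρ) ρ)
    (hp'cont : ContinuousOn p' (Set.Ioi 0))
    (hppos : ∀ ρ > (0 : ℝ), 0 < p' ρ)
    (hlim : ∃ η a : ℝ, 0 < η ∧ η < 1 ∧ 0 < a ∧
      Tendsto (fun ρ => ρ ^ η * Real.sqrt (p' ρ)) (𝓝[>] (0 : ℝ)) (𝓝 a)) :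
    ∀ ρl > (0 : ℝ),
      Tendsto
        (fun ρ => (∫ s in ρ..ρl, Real.sqrt (p' s) / s) -
          Real.sqrt (p' ρ) - Real.sqrt (p' ρl)) (𝓝[>] (0 : ℝ)) atTop ∧
      0 ≤ Filter.liminf
        (fun ρ => (∫ s in ρ..ρl, Real.sqrt (p' s) / s) -
          Real.sqrt (p' ρ) - Real.sqrt (p' ρl)) (𝓝[>] (0 : ℝ)) :=
  stmt16_general p' hp'cont hlim
end
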